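/- arXiv:2111.08292 — 8 statements merged into one kernel-verified Lean document; each statement's English description precedes it below -/
import Mathlib

section
/- For every N > 0, the quantity sup over φ in S^N of ∫₀^T ∫_Z g(z)² · (φ(s,z) + 1) ν(dz) ds is finite. -/
/-!
The convex dual of `ℓ(r) = r log r - r + 1` is `x ↦ eˣ - 1`, so Young's inequality with `x = δ g²`
gives `g² φ ≤ δ⁻¹ ℓ(φ) + δ⁻¹ (exp (δ g²) - 1)`. Over `S^N` the first term integrates to at most
`N / δ`. The second does not depend on `φ` and is `ν`-integrable: on `{g² ≥ 1}`, which has finite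
measure by Markov's inequality, it is bounded by `exp (δ g²)`, and on `{g² < 1}` by a multiple of
`g²`.
-/

open MeasureTheory Set
open scoped ENNReal

namespace Real

theorem mul_le_mul_log_sub_add_exp (x : ℝ) {b : ℝ} (hb : 0 ≤ b) :
    x * b ≤ b * log b - b + exp x := by
  rcases hb.eq_or_lt with rfl | hb
  · simpa using (exp_pos x).le
  · have h : exp x = b * exp (x - log b) := by rw [exp_sub, exp_log hb]; field_simp
    nlinarith [add_one_le_exp (x - log b)]

theorem exp_sub_one_le_mul_exp (x : ℝ) : exp x - 1 ≤ x * exp x := by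
  have h : exp x * exp (-x) = 1 := by rw [← exp_add, add_neg_cancel, exp_zero]
  nlinarith [add_one_le_exp (-x), exp_pos x]

theorem exp_mul_sub_one_le_of_le_one {δ t : ℝ} (hδ : 0 ≤ δ) (ht : 0 ≤ t) (ht1 : t ≤ 1) :
    exp (δ * t) - 1 ≤ δ * exp δ * t := by
  have hexp : exp (δ * t) ≤ exp δ := exp_le_exp.2 (by nlinarith)
  nlinarith [exp_sub_one_le_mul_exp (δ * t), mul_nonneg hδ ht]

end Real

open Real

theorem ENNReal.ofReal_mul_add_one_le {δ a b : ℝ} (hδ : 0 < δ) (hb : 0 ≤ b) :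
    ENNReal.ofReal (a * (b + 1)) ≤
      ENNReal.ofReal δ⁻¹ * ENNReal.ofReal (b * Real.log b - b + 1) +
        (ENNReal.ofReal a + ENNReal.ofReal δ⁻¹ * ENNReal.ofReal (Real.exp (δ * a) - 1)) := by
  have hδ' : 0 ≤ δ⁻¹ := inv_nonneg.2 hδ.le
  have young :
      a * (b + 1) ≤ δ⁻¹ * (b * Real.log b - b + 1) + (a + δ⁻¹ * (Real.exp (δ * a) - 1)) := by
    have h := mul_le_mul_of_nonneg_left (mul_le_mul_log_sub_add_exp (δ * a) hb) hδ'
    field_simp at h ⊢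
    linarith
  rw [← ENNReal.ofReal_mul hδ', ← ENNReal.ofReal_mul hδ']
  exact (ENNReal.ofReal_le_ofReal young).trans
    (ENNReal.ofReal_add_le.trans (add_le_add_right ENNReal.ofReal_add_le _))

section lintegral

variable {α : Type*} [MeasurableSpace α] {μ : Measure α}

theorem measure_one_le_lt_top_of_lintegral_ofReal_lt_top {f : α → ℝ} (hf : Measurable f)
    (hfint : ∫⁻ x, ENNReal.ofReal (f x) ∂μ < ∞) : μ {x | 1 ≤ f x} < ∞ :=
  calc μ {x | 1 ≤ f x} = μ {x | 1 ≤ ENNReal.ofReal (f x)} := by simp [ENNReal.one_le_ofReal]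
    _ ≤ ∫⁻ x, ENNReal.ofReal (f x) ∂μ := by
      simpa using mul_meas_ge_le_lintegral₀ hf.ennreal_ofReal.aemeasurable (μ := μ) 1
    _ < ∞ := hfint

theorem lintegral_ofReal_exp_mul_sub_one_lt_top {f : α → ℝ} {δ : ℝ} (hf : Measurable f)
    (hf0 : ∀ x, 0 ≤ f x) (hδ : 0 ≤ δ) (hfint : ∫⁻ x, ENNReal.ofReal (f x) ∂μ < ∞)
    (hexp : ∀ E, MeasurableSet E → μ E < ∞ →
      ∫⁻ x in E, ENNReal.ofReal (exp (δ * f x)) ∂μ < ∞) :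
    ∫⁻ x, ENNReal.ofReal (exp (δ * f x) - 1) ∂μ < ∞ := by
  set A := {x | 1 ≤ f x}
  have hA : MeasurableSet A := measurableSet_le measurable_const hf
  have hbound : ∀ x, ENNReal.ofReal (exp (δ * f x) - 1) ≤
      ENNReal.ofReal (δ * exp δ) * ENNReal.ofReal (f x) +
        A.indicator (fun x ↦ ENNReal.ofReal (exp (δ * f x))) x := by
    intro x
    by_cases hx : x ∈ A
    · rw [indicator_of_mem hx]
      exact le_add_left (ENNReal.ofReal_le_ofReal (by linarith))
    · rw [indicator_of_notMem hx, add_zero, ← ENNReal.ofReal_mul (by positivity)]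
      exact ENNReal.ofReal_le_ofReal
        (exp_mul_sub_one_le_of_le_one hδ (hf0 x) (not_le.1 hx).le)
  calc ∫⁻ x, ENNReal.ofReal (exp (δ * f x) - 1) ∂μ
      ≤ ∫⁻ x, (ENNReal.ofReal (δ * exp δ) * ENNReal.ofReal (f x) +
          A.indicator (fun x ↦ ENNReal.ofReal (exp (δ * f x))) x) ∂μ := lintegral_mono hbound
    _ = ENNReal.ofReal (δ * exp δ) * ∫⁻ x, ENNReal.ofReal (f x) ∂μ +
          ∫⁻ x in A, ENNReal.ofReal (exp (δ * f x)) ∂μ := by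
      rw [lintegral_add_left (hf.ennreal_ofReal.const_mul _),
        lintegral_const_mul _ hf.ennreal_ofReal, lintegral_indicator hA]
    _ < ∞ := ENNReal.add_lt_top.2
      ⟨ENNReal.mul_lt_top ENNReal.ofReal_lt_top hfint,
        hexp A hA (measure_one_le_lt_top_of_lintegral_ofReal_lt_top hf hfint)⟩

theorem lintegral_lintegral_le_mul_add {β : Type*} [MeasurableSpace β] {ν : Measure β}
    {F L : α → β → ℝ≥0∞} {H : β → ℝ≥0∞} {c : ℝ≥0∞} (hc : c ≠ ∞) (hH : Measurable H)
    (h : ∀ s z, F s z ≤ c * L s z + H z) :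
    ∫⁻ s, ∫⁻ z, F s z ∂ν ∂μ ≤ c * ∫⁻ s, ∫⁻ z, L s z ∂ν ∂μ + (∫⁻ z, H z ∂ν) * μ univ :=
  calc ∫⁻ s, ∫⁻ z, F s z ∂ν ∂μ ≤ ∫⁻ s, ∫⁻ z, (c * L s z + H z) ∂ν ∂μ :=
        lintegral_mono fun s ↦ lintegral_mono (h s)
    _ = c * ∫⁻ s, ∫⁻ z, L s z ∂ν ∂μ + (∫⁻ z, H z ∂ν) * μ univ := by
        simp_rw [lintegral_add_right _ hH, lintegral_const_mul' _ _ hc]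
        rw [lintegral_add_right _ measurable_const, lintegral_const_mul' _ _ hc, lintegral_const]

end lintegral

theorem stmt0_general
    {Z : Type*}
    [MeasurableSpace Z]
    (ν : Measure Z)
    (T : ℝ)
    (ℓ : ℝ → ℝ) (hℓ : ∀ r : ℝ, 0 ≤ r → ℓ r = r * Real.log r - r + 1)
    (g : Z → ℝ) (hgmeas : Measurable g)
    (hgL2 : ∫⁻ z, ENNReal.ofReal (g z ^ 2) ∂ν < ⊤)
    (hgexp : ∃ δ : ℝ, 0 < δ ∧ ∀ E : Set Z, MeasurableSet E → ν E < ⊤ →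
        ∫⁻ z in E, ENNReal.ofReal (Real.exp (δ * g z ^ 2)) ∂ν < ⊤)
    (N : ℝ) :
    (⨆ φ ∈ {φ : ℝ × Z → ℝ | Measurable φ ∧ (∀ p, 0 ≤ φ p) ∧
        ∫⁻ s in Icc (0 : ℝ) T, ∫⁻ z, ENNReal.ofReal (ℓ (φ (s, z))) ∂ν
          ≤ ENNReal.ofReal N},
      ∫⁻ s in Icc (0 : ℝ) T, ∫⁻ z, ENNReal.ofReal (g z ^ 2 * (φ (s, z) + 1)) ∂ν) < ⊤ := by
  obtain ⟨δ, hδ, hexp⟩ := hgexp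
  have hg2 : Measurable fun z ↦ g z ^ 2 := hgmeas.pow_const 2
  set H : Z → ℝ≥0∞ := fun z ↦
    ENNReal.ofReal (g z ^ 2) + ENNReal.ofReal δ⁻¹ * ENNReal.ofReal (exp (δ * g z ^ 2) - 1)
  have hH : Measurable H := by fun_prop
  have hH_lt_top : ∫⁻ z, H z ∂ν < ∞ := by
    rw [lintegral_add_left hg2.ennreal_ofReal, lintegral_const_mul' _ _ ENNReal.ofReal_ne_top]
    exact ENNReal.add_lt_top.2 ⟨hgL2, ENNReal.mul_lt_top ENNReal.ofReal_lt_top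
      (lintegral_ofReal_exp_mul_sub_one_lt_top hg2 (fun z ↦ sq_nonneg _) hδ.le hgL2 hexp)⟩
  refine (iSup₂_le fun φ hφ ↦ ?bound).trans_lt (b := ENNReal.ofReal δ⁻¹ * ENNReal.ofReal N +
    (∫⁻ z, H z ∂ν) * volume.restrict (Icc (0 : ℝ) T) univ) ?finite
  case bound =>
    obtain ⟨-, hφ0, hφN⟩ := hφ
    calc _ ≤ _ := lintegral_lintegral_le_mul_add ENNReal.ofReal_ne_top hH fun s z ↦
          hℓ _ (hφ0 (s, z)) ▸ ENNReal.ofReal_mul_add_one_le hδ (hφ0 (s, z))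
      _ ≤ _ := by gcongr
  case finite =>
    rw [Measure.restrict_apply_univ, Real.volume_Icc]
    exact ENNReal.add_lt_top.2 ⟨ENNReal.mul_lt_top ENNReal.ofReal_lt_top ENNReal.ofReal_lt_top,
      ENNReal.mul_lt_top hH_lt_top ENNReal.ofReal_lt_top⟩

/-- For every `N > 0`, the supremum over `φ ∈ S^N` of
`∫₀^T ∫_Z g(z)² (φ(s,z)+1) ν(dz) ds` is finite. -/
theorem stmt0
    {Z : Type*} [TopologicalSpace Z] [PolishSpace Z] [LocallyCompactSpace Z]
    [MeasurableSpace Z] [BorelSpace Z]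
    (ν : Measure Z) [IsFiniteMeasureOnCompacts ν] [SigmaFinite ν]
    (T : ℝ) (hT : 0 < T)
    (ℓ : ℝ → ℝ) (hℓ : ∀ r : ℝ, 0 ≤ r → ℓ r = r * Real.log r - r + 1)
    (g : Z → ℝ) (hgmeas : Measurable g)
    (hgL2 : ∫⁻ z, ENNReal.ofReal (g z ^ 2) ∂ν < ⊤)
    (hgexp : ∃ δ : ℝ, 0 < δ ∧ ∀ E : Set Z, MeasurableSet E → ν E < ⊤ →
        ∫⁻ z in E, ENNReal.ofReal (Real.exp (δ * g z ^ 2)) ∂ν < ⊤)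
    (N : ℝ) (hN : 0 < N) :
    (⨆ φ ∈ {φ : ℝ × Z → ℝ | Measurable φ ∧ (∀ p, 0 ≤ φ p) ∧
        ∫⁻ s in Icc (0 : ℝ) T, ∫⁻ z, ENNReal.ofReal (ℓ (φ (s, z))) ∂ν
          ≤ ENNReal.ofReal N},
      ∫⁻ s in Icc (0 : ℝ) T, ∫⁻ z, ENNReal.ofReal (g z ^ 2 * (φ (s, z) + 1)) ∂ν) < ⊤ :=
  stmt0_general ν T ℓ hℓ g hgmeas hgL2 hgexp N
end

section
/- For every N > 0, the quantity sup over φ in S^N of ∫₀^T ∫_Z |g(z)| · |φ(s,z) − 1| ν(dz) ds is finite. -/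
open MeasureTheory Set

/-! The function `ψ t = exp t - 1 - t` is the Legendre dual of `ℓ` recentred at `1`:
`t (x - 1) ≤ ℓ x + ψ t` for `x ≥ 0`. Taking `t = ±|g z|` bounds the integrand by
`ℓ (φ (s, z)) + ψ |g z|`, so the supremum is at most `N + T ∫ ψ |g| dν`. That integral is
finite: `ψ a ≤ a²` for `a ≤ 1`, controlled by `∫ g² dν`, while on `{|g| > 1}`, a set of
finite measure by Chebyshev, `ψ |g| ≤ exp |g| ≤ exp (1/(4δ)) exp (δ g²)`. -/

lemma mul_sub_one_le_entropy_add (t : ℝ) {x : ℝ} (hx : 0 ≤ x) :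
    t * (x - 1) ≤ (x * Real.log x - x + 1) + (Real.exp t - 1 - t) := by
  rcases hx.eq_or_lt with rfl | hx
  · simp only [Real.log_zero, mul_zero, sub_self, zero_sub]
    linarith [Real.exp_pos t]
  · have key : x * ((t - Real.log x) + 1) ≤ x * Real.exp (t - Real.log x) :=
      mul_le_mul_of_nonneg_left (Real.add_one_le_exp _) hx.le
    rw [Real.exp_sub, Real.exp_log hx, mul_div_cancel₀ _ hx.ne'] at key
    linarith

lemma mul_abs_sub_one_le_entropy_add {a x : ℝ} (ha : 0 ≤ a) (hx : 0 ≤ x) :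
    a * |x - 1| ≤ (x * Real.log x - x + 1) + (Real.exp a - 1 - a) := by
  rcases le_total 1 x with h1 | h1
  · rw [abs_of_nonneg (sub_nonneg.mpr h1)]
    exact mul_sub_one_le_entropy_add a hx
  · have hsinh : a ≤ Real.sinh a := Real.self_le_sinh_iff.mpr ha
    rw [Real.sinh_eq] at hsinh
    rw [abs_of_nonpos (sub_nonpos.mpr h1)]
    linarith [mul_sub_one_le_entropy_add (-a) hx]

lemma abs_le_mul_sq_add_inv {δ : ℝ} (hδ : 0 < δ) (y : ℝ) :
    |y| ≤ δ * y ^ 2 + (4 * δ)⁻¹ := by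
  have key : δ * y ^ 2 + (4 * δ)⁻¹ - |y| = (2 * δ * |y| - 1) ^ 2 / (4 * δ) := by
    rw [← sq_abs y]
    field_simp
    ring
  have hsq : 0 ≤ (2 * δ * |y| - 1) ^ 2 / (4 * δ) := by positivity
  linarith

section

variable {α : Type*} [MeasurableSpace α] {μ : Measure α} {g : α → ℝ}

lemma measure_one_lt_abs_lt_top (hg : Measurable g)
    (hg2 : ∫⁻ z, ENNReal.ofReal (g z ^ 2) ∂μ < ⊤) :
    μ {z | 1 < |g z|} < ⊤ := by
  calc μ {z | 1 < |g z|} ≤ μ {z | 1 ≤ ENNReal.ofReal (g z ^ 2)} :=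
        measure_mono fun z (hz : 1 < |g z|) =>
          ENNReal.one_le_ofReal.mpr ((one_lt_sq_iff_one_lt_abs _).mpr hz).le
    _ ≤ (∫⁻ z, ENNReal.ofReal (g z ^ 2) ∂μ) / 1 :=
        meas_ge_le_lintegral_div (by fun_prop) one_ne_zero ENNReal.one_ne_top
    _ < ⊤ := by rwa [div_one]

lemma setLIntegral_exp_abs_lt_top {δ : ℝ} (hδ : 0 < δ) {E : Set α}
    (hE : ∫⁻ z in E, ENNReal.ofReal (Real.exp (δ * g z ^ 2)) ∂μ < ⊤) :
    ∫⁻ z in E, ENNReal.ofReal (Real.exp |g z|) ∂μ < ⊤ := by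
  calc ∫⁻ z in E, ENNReal.ofReal (Real.exp |g z|) ∂μ
      ≤ ∫⁻ z in E, ENNReal.ofReal (Real.exp (4 * δ)⁻¹) *
          ENNReal.ofReal (Real.exp (δ * g z ^ 2)) ∂μ := by
        refine lintegral_mono fun z => ?_
        rw [← ENNReal.ofReal_mul (Real.exp_nonneg _), ← Real.exp_add]
        gcongr
        linarith [abs_le_mul_sq_add_inv hδ (g z)]
    _ = ENNReal.ofReal (Real.exp (4 * δ)⁻¹) *
          ∫⁻ z in E, ENNReal.ofReal (Real.exp (δ * g z ^ 2)) ∂μ :=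
        lintegral_const_mul' _ _ ENNReal.ofReal_ne_top
    _ < ⊤ := ENNReal.mul_lt_top ENNReal.ofReal_lt_top hE

lemma lintegral_exp_abs_sub_one_sub_abs_lt_top (hg : Measurable g)
    (hg2 : ∫⁻ z, ENNReal.ofReal (g z ^ 2) ∂μ < ⊤) {δ : ℝ} (hδ : 0 < δ)
    (hexp : ∀ E : Set α, MeasurableSet E → μ E < ⊤ →
      ∫⁻ z in E, ENNReal.ofReal (Real.exp (δ * g z ^ 2)) ∂μ < ⊤) :
    ∫⁻ z, ENNReal.ofReal (Real.exp |g z| - 1 - |g z|) ∂μ < ⊤ := by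
  set E := {z | 1 < |g z|}
  have hE : MeasurableSet E := measurableSet_lt measurable_const hg.abs
  calc ∫⁻ z, ENNReal.ofReal (Real.exp |g z| - 1 - |g z|) ∂μ
      ≤ ∫⁻ z, ENNReal.ofReal (g z ^ 2) +
          E.indicator (fun z => ENNReal.ofReal (Real.exp |g z|)) z ∂μ := by
        refine lintegral_mono fun z => ?_
        by_cases hz : z ∈ E
        · rw [indicator_of_mem hz, ← ENNReal.ofReal_add (sq_nonneg _) (Real.exp_nonneg _)]
          gcongr
          linarith [sq_nonneg (g z), abs_nonneg (g z)]
        · rw [indicator_of_notMem hz, add_zero, ← sq_abs]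
          have h1 : |(|g z|)| ≤ 1 := by simpa [E] using hz
          exact ENNReal.ofReal_le_ofReal
            ((le_abs_self _).trans (Real.abs_exp_sub_one_sub_id_le h1))
    _ = ∫⁻ z, ENNReal.ofReal (g z ^ 2) ∂μ +
          ∫⁻ z in E, ENNReal.ofReal (Real.exp |g z|) ∂μ := by
        rw [lintegral_add_left (by fun_prop), lintegral_indicator hE]
    _ < ⊤ := ENNReal.add_lt_top.mpr
        ⟨hg2, setLIntegral_exp_abs_lt_top hδ (hexp E hE (measure_one_lt_abs_lt_top hg hg2))⟩

end

theorem stmt1_general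
    {Z : Type*} [MeasurableSpace Z] (ν : Measure Z) (T : ℝ)
    (ℓ : ℝ → ℝ) (hℓ : ∀ r : ℝ, 0 ≤ r → ℓ r = r * Real.log r - r + 1)
    (g : Z → ℝ) (hgmeas : Measurable g)
    (hgL2 : ∫⁻ z, ENNReal.ofReal (g z ^ 2) ∂ν < ⊤)
    (hgexp : ∃ δ : ℝ, 0 < δ ∧ ∀ E : Set Z, MeasurableSet E → ν E < ⊤ →
        ∫⁻ z in E, ENNReal.ofReal (Real.exp (δ * g z ^ 2)) ∂ν < ⊤)
    (N : ℝ) :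
    (⨆ φ ∈ {φ : ℝ × Z → ℝ | Measurable φ ∧ (∀ p, 0 ≤ φ p) ∧
        ∫⁻ s in Icc (0 : ℝ) T, ∫⁻ z, ENNReal.ofReal (ℓ (φ (s, z))) ∂ν
          ≤ ENNReal.ofReal N},
      ∫⁻ s in Icc (0 : ℝ) T, ∫⁻ z, ENNReal.ofReal (|g z| * |φ (s, z) - 1|) ∂ν) < ⊤ := by
  obtain ⟨δ, hδ, hexp⟩ := hgexp
  set C := ∫⁻ z, ENNReal.ofReal (Real.exp |g z| - 1 - |g z|) ∂ν
  have hC : C < ⊤ := lintegral_exp_abs_sub_one_sub_abs_lt_top hgmeas hgL2 hδ hexp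
  have hbound : ENNReal.ofReal N + volume (Icc (0 : ℝ) T) * C < ⊤ :=
    ENNReal.add_lt_top.mpr ⟨ENNReal.ofReal_lt_top, ENNReal.mul_lt_top (by simp) hC⟩
  refine (iSup₂_le fun φ ⟨_, hφ0, hφN⟩ => ?_).trans_lt hbound
  calc ∫⁻ s in Icc (0 : ℝ) T, ∫⁻ z, ENNReal.ofReal (|g z| * |φ (s, z) - 1|) ∂ν
      ≤ ∫⁻ s in Icc (0 : ℝ) T, ∫⁻ z, ENNReal.ofReal (ℓ (φ (s, z)))
          + ENNReal.ofReal (Real.exp |g z| - 1 - |g z|) ∂ν := by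
        refine lintegral_mono fun s => lintegral_mono fun z => ?_
        rw [hℓ _ (hφ0 (s, z))]
        exact (ENNReal.ofReal_le_ofReal (mul_abs_sub_one_le_entropy_add (abs_nonneg _)
          (hφ0 (s, z)))).trans ENNReal.ofReal_add_le
    _ = (∫⁻ s in Icc (0 : ℝ) T, ∫⁻ z, ENNReal.ofReal (ℓ (φ (s, z))) ∂ν)
          + volume (Icc (0 : ℝ) T) * C := by
        simp_rw [lintegral_add_right _ (by fun_prop : Measurable fun z =>
          ENNReal.ofReal (Real.exp |g z| - 1 - |g z|))]
        rw [lintegral_add_right _ measurable_const, setLIntegral_const, mul_comm]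
    _ ≤ ENNReal.ofReal N + volume (Icc (0 : ℝ) T) * C := by gcongr

/-- For every `N > 0`, the supremum over `φ ∈ S^N` of
`∫₀^T ∫_Z |g(z)| |φ(s,z) − 1| ν(dz) ds` is finite. -/
theorem stmt1
    {Z : Type*} [TopologicalSpace Z] [PolishSpace Z] [LocallyCompactSpace Z]
    [MeasurableSpace Z] [BorelSpace Z]
    (ν : Measure Z) [IsFiniteMeasureOnCompacts ν] [SigmaFinite ν]
    (T : ℝ) (hT : 0 < T)
    (ℓ : ℝ → ℝ) (hℓ : ∀ r : ℝ, 0 ≤ r → ℓ r = r * Real.log r - r + 1)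
    (g : Z → ℝ) (hgmeas : Measurable g)
    (hgL2 : ∫⁻ z, ENNReal.ofReal (g z ^ 2) ∂ν < ⊤)
    (hgexp : ∃ δ : ℝ, 0 < δ ∧ ∀ E : Set Z, MeasurableSet E → ν E < ⊤ →
        ∫⁻ z in E, ENNReal.ofReal (Real.exp (δ * g z ^ 2)) ∂ν < ⊤)
    (N : ℝ) (hN : 0 < N) :
    (⨆ φ ∈ {φ : ℝ × Z → ℝ | Measurable φ ∧ (∀ p, 0 ≤ φ p) ∧
        ∫⁻ s in Icc (0 : ℝ) T, ∫⁻ z, ENNReal.ofReal (ℓ (φ (s, z))) ∂ν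
          ≤ ENNReal.ofReal N},
      ∫⁻ s in Icc (0 : ℝ) T, ∫⁻ z, ENNReal.ofReal (|g z| * |φ (s, z) - 1|) ∂ν) < ⊤ :=
  stmt1_general ν T ℓ hℓ g hgmeas hgL2 hgexp N
end

section
/- For every N > 0 and every η > 0 there exists δ₀ > 0 such that for every Lebesgue-measurable set A ⊆ [0,T] with Lebesgue measure λ(A) < δ₀ one has sup over φ in S^N of ∫_A ∫_Z |g(z)| · |φ(s,z) − 1| ν(dz) ds ≤ η. -/
/-!
Fenchel–Young duality between the entropy `ℓ(b) = b log b - b + 1` and `c ↦ eᶜ - c - 1` gives,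
pointwise, `σ |g| |φ - 1| ≤ ℓ(φ) + (e^{σ|g|} - σ|g| - 1)` for every `σ ≥ 0`. Integrating over
`A × Z` bounds `σ ∫_A ∫_Z |g| |φ - 1|` by `N + λ(A) H(σ)`, where `H(σ) = ∫_Z (e^{σ|g|} - σ|g| - 1) dν`.
`H(σ)` is finite: where `|g|` is small the integrand is `O(g²)`, and the set where `|g|` is large
has finite measure (Chebyshev) and there the integrand is below `exp(δ g²)`.
Taking `σ = 2N/η` and `λ(A) < N / (H(σ) + 1)` gives the bound `η`.
-/

open MeasureTheory Set

namespace Real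

theorem mul_le_exp_add_mul_log_sub {b : ℝ} (hb : 0 ≤ b) (x : ℝ) :
    b * x ≤ exp x + b * log b - b := by
  rcases hb.eq_or_lt with rfl | hb
  · simp [(exp_pos x).le]
  · have key : b * ((x - log b) + 1) ≤ b * exp (x - log b) :=
      mul_le_mul_of_nonneg_left (add_one_le_exp _) hb.le
    rw [exp_sub, exp_log hb, mul_div_cancel₀ _ hb.ne'] at key
    linarith

theorem mul_abs_sub_one_le_add_exp_sub {b c : ℝ} (hb : 0 ≤ b) (hc : 0 ≤ c) :
    c * |b - 1| ≤ (b * log b - b + 1) + (exp c - c - 1) := by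
  rcases le_total b 1 with h | h
  · -- Young's inequality at `-c` leaves `e^{-c} + c`, which is at most `eᶜ - c` as `c ≤ sinh c`.
    rw [abs_of_nonpos (by linarith)]
    have young := mul_le_exp_add_mul_log_sub hb (-c)
    have sinh_ge : c ≤ sinh c := self_le_sinh_iff.mpr hc
    rw [sinh_eq] at sinh_ge
    nlinarith
  · rw [abs_of_nonneg (by linarith)]
    nlinarith [mul_le_exp_add_mul_log_sub hb c]

theorem exp_sub_sub_one_le_sq_mul_exp {c : ℝ} (hc : 0 ≤ c) : exp c - c - 1 ≤ c ^ 2 * exp c := by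
  have h₁ : 1 - c ≤ exp (-c) := by linarith [add_one_le_exp (-c)]
  have h₂ : exp (-c) * exp c = 1 := by rw [← exp_add, neg_add_cancel, exp_zero]
  have h₃ : exp c - 1 ≤ c * exp c := by nlinarith [exp_pos c]
  nlinarith [exp_pos c]

end Real

section

variable {Z : Type*} [MeasurableSpace Z] {ν : Measure Z} {g : Z → ℝ}

theorem measure_setOf_lt_abs_lt_top (hg : Measurable g) (hgL2 : ∫⁻ z, ENNReal.ofReal (g z ^ 2) ∂ν < ⊤)
    {c : ℝ} (hc : 0 < c) : ν {z | c < |g z|} < ⊤ := by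
  have hsub : {z | c < |g z|} ⊆ {z | ENNReal.ofReal (c ^ 2) ≤ ENNReal.ofReal (g z ^ 2)} :=
    fun z (hz : c < |g z|) => ENNReal.ofReal_le_ofReal <| by
      nlinarith [sq_abs (g z), abs_nonneg (g z)]
  refine (measure_mono hsub).trans_lt ((meas_ge_le_lintegral_div
    (hg.pow_const 2).ennreal_ofReal.aemeasurable ?_ ENNReal.ofReal_ne_top).trans_lt ?_)
  · exact (ENNReal.ofReal_pos.mpr (by positivity)).ne'
  · exact ENNReal.div_lt_top hgL2.ne (ENNReal.ofReal_pos.mpr (by positivity)).ne'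

theorem lintegral_exp_mul_abs_sub_lt_top (hg : Measurable g)
    (hgL2 : ∫⁻ z, ENNReal.ofReal (g z ^ 2) ∂ν < ⊤) {δ : ℝ} (hδ : 0 < δ)
    (hgexp : ∀ E : Set Z, MeasurableSet E → ν E < ⊤ →
      ∫⁻ z in E, ENNReal.ofReal (Real.exp (δ * g z ^ 2)) ∂ν < ⊤)
    {σ : ℝ} (hσ : 0 ≤ σ) :
    ∫⁻ z, ENNReal.ofReal (Real.exp (σ * |g z|) - σ * |g z| - 1) ∂ν < ⊤ := by
  set β := σ / δ + 1
  have hβ : 0 < β := by positivity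
  set E := {z | β < |g z|}
  have hE : MeasurableSet E := measurableSet_lt measurable_const hg.abs
  rw [← lintegral_add_compl _ hE]
  refine ENNReal.add_lt_top.mpr ⟨?large, ?small⟩
  case large =>
    refine (setLIntegral_mono (by fun_prop) fun z hz => ?_).trans_lt
      (hgexp E hE (measure_setOf_lt_abs_lt_top hg hgL2 hβ))
    have hz : σ ≤ δ * |g z| := by
      have : σ / δ ≤ |g z| := by linarith [show β < |g z| from hz]
      rwa [div_le_iff₀ hδ, mul_comm] at this
    have : σ * |g z| ≤ δ * g z ^ 2 := by
      nlinarith [abs_nonneg (g z), sq_abs (g z)]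
    refine ENNReal.ofReal_le_ofReal ?_
    nlinarith [Real.exp_le_exp.mpr this, mul_nonneg hσ (abs_nonneg (g z))]
  case small =>
    have hpt : ∀ z ∈ Eᶜ, ENNReal.ofReal (Real.exp (σ * |g z|) - σ * |g z| - 1) ≤
        ENNReal.ofReal (σ ^ 2 * Real.exp (σ * β)) * ENNReal.ofReal (g z ^ 2) := by
      intro z hz
      have hz : |g z| ≤ β := not_lt.mp hz
      rw [← ENNReal.ofReal_mul (by positivity)]
      refine ENNReal.ofReal_le_ofReal ((Real.exp_sub_sub_one_le_sq_mul_exp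
        (mul_nonneg hσ (abs_nonneg _))).trans ?_)
      rw [mul_pow, sq_abs, mul_right_comm]
      gcongr
    calc _ ≤ ∫⁻ z in Eᶜ, ENNReal.ofReal (σ ^ 2 * Real.exp (σ * β)) * ENNReal.ofReal (g z ^ 2) ∂ν :=
          setLIntegral_mono (measurable_const.mul (hg.pow_const 2).ennreal_ofReal) hpt
      _ ≤ ENNReal.ofReal (σ ^ 2 * Real.exp (σ * β)) * ∫⁻ z, ENNReal.ofReal (g z ^ 2) ∂ν := by
          rw [← lintegral_const_mul' _ _ ENNReal.ofReal_ne_top]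
          exact setLIntegral_le_lintegral _ _
      _ < ⊤ := ENNReal.mul_lt_top ENNReal.ofReal_lt_top hgL2

theorem mul_setLIntegral_abs_mul_abs_sub_one_le {α : Type*} [MeasurableSpace α] {μ : Measure α}
    (hg : Measurable g) {σ : ℝ} (hσ : 0 ≤ σ) {φ : α × Z → ℝ} (hφ : ∀ p, 0 ≤ φ p) (A : Set α) :
    ENNReal.ofReal σ * ∫⁻ s in A, ∫⁻ z, ENNReal.ofReal (|g z| * |φ (s, z) - 1|) ∂ν ∂μ ≤
      ∫⁻ s in A, ∫⁻ z, ENNReal.ofReal (φ (s, z) * Real.log (φ (s, z)) - φ (s, z) + 1) ∂ν ∂μ +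
        (∫⁻ z, ENNReal.ofReal (Real.exp (σ * |g z|) - σ * |g z| - 1) ∂ν) * μ A := by
  have hpt : ∀ s z, ENNReal.ofReal σ * ENNReal.ofReal (|g z| * |φ (s, z) - 1|) ≤
      ENNReal.ofReal (φ (s, z) * Real.log (φ (s, z)) - φ (s, z) + 1) +
        ENNReal.ofReal (Real.exp (σ * |g z|) - σ * |g z| - 1) := fun s z => by
    rw [← ENNReal.ofReal_mul hσ, ← mul_assoc]
    exact (ENNReal.ofReal_le_ofReal (Real.mul_abs_sub_one_le_add_exp_sub (hφ (s, z))
      (mul_nonneg hσ (abs_nonneg _)))).trans ENNReal.ofReal_add_le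
  have hmeas : Measurable fun z => ENNReal.ofReal (Real.exp (σ * |g z|) - σ * |g z| - 1) := by
    fun_prop
  rw [← lintegral_const_mul' _ _ ENNReal.ofReal_ne_top, ← setLIntegral_const,
    ← lintegral_add_right _ measurable_const]
  refine lintegral_mono fun s => ?_
  rw [← lintegral_const_mul' _ _ ENNReal.ofReal_ne_top, ← lintegral_add_right _ hmeas]
  exact lintegral_mono (hpt s)

end

theorem stmt2_general
    {Z : Type*}
    [MeasurableSpace Z]
    (ν : Measure Z)
    (T : ℝ)
    (ℓ : ℝ → ℝ) (hℓ : ∀ r : ℝ, 0 ≤ r → ℓ r = r * Real.log r - r + 1)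
    (g : Z → ℝ) (hgmeas : Measurable g)
    (hgL2 : ∫⁻ z, ENNReal.ofReal (g z ^ 2) ∂ν < ⊤)
    (hgexp : ∃ δ : ℝ, 0 < δ ∧ ∀ E : Set Z, MeasurableSet E → ν E < ⊤ →
        ∫⁻ z in E, ENNReal.ofReal (Real.exp (δ * g z ^ 2)) ∂ν < ⊤)
    (N : ℝ) (hN : 0 < N) (η : ℝ) (hη : 0 < η) :
    ∃ δ₀ : ℝ, 0 < δ₀ ∧ ∀ A : Set ℝ, MeasurableSet A → A ⊆ Icc (0 : ℝ) T →
      volume A < ENNReal.ofReal δ₀ →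
      (⨆ φ ∈ {φ : ℝ × Z → ℝ | Measurable φ ∧ (∀ p, 0 ≤ φ p) ∧
          ∫⁻ s in Icc (0 : ℝ) T, ∫⁻ z, ENNReal.ofReal (ℓ (φ (s, z))) ∂ν
            ≤ ENNReal.ofReal N},
        ∫⁻ s in A, ∫⁻ z, ENNReal.ofReal (|g z| * |φ (s, z) - 1|) ∂ν)
        ≤ ENNReal.ofReal η := by
  obtain ⟨δ, hδ, hδint⟩ := hgexp
  set σ := 2 * N / η
  have hσ : 0 < σ := by positivity
  set H := ∫⁻ z, ENNReal.ofReal (Real.exp (σ * |g z|) - σ * |g z| - 1) ∂ν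
  have hH : H ≠ ⊤ := (lintegral_exp_mul_abs_sub_lt_top hgmeas hgL2 hδ hδint hσ.le).ne
  refine ⟨N / (H.toReal + 1), by positivity, fun A _ hAT hA => iSup₂_le fun φ hφ => ?_⟩
  obtain ⟨-, hφ0, hφN⟩ := hφ
  have hentropy : ∫⁻ s in A, ∫⁻ z, ENNReal.ofReal
      (φ (s, z) * Real.log (φ (s, z)) - φ (s, z) + 1) ∂ν ≤ ENNReal.ofReal N := by
    refine (lintegral_mono_set hAT).trans (le_of_eq_of_le ?_ hφN)
    simp only [hℓ _ (hφ0 _)]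
  have hsmall : H * volume A ≤ ENNReal.ofReal N := by
    calc H * volume A ≤ ENNReal.ofReal (H.toReal + 1) * ENNReal.ofReal (N / (H.toReal + 1)) := by
          gcongr
          exact (ENNReal.le_ofReal_iff_toReal_le hH (by positivity)).mpr (by linarith)
      _ = ENNReal.ofReal N := by
          rw [← ENNReal.ofReal_mul (by positivity), mul_div_cancel₀ _ (by positivity)]
  refine (ENNReal.mul_le_mul_iff_right (ENNReal.ofReal_pos.mpr hσ).ne' ENNReal.ofReal_ne_top).mp ?_
  calc _ ≤ ENNReal.ofReal N + ENNReal.ofReal N :=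
        (mul_setLIntegral_abs_mul_abs_sub_one_le hgmeas hσ.le hφ0 A).trans (add_le_add hentropy hsmall)
    _ = ENNReal.ofReal σ * ENNReal.ofReal η := by
        rw [← ENNReal.ofReal_add hN.le hN.le, ← ENNReal.ofReal_mul hσ.le]
        congr 1
        simp only [σ]
        field_simp
        ring

/-- For every `N > 0` and `η > 0` there is `δ₀ > 0` such that for every measurable
`A ⊆ [0,T]` with Lebesgue measure `< δ₀`, the supremum over `φ ∈ S^N` of
`∫_A ∫_Z |g(z)| |φ(s,z) − 1| ν(dz) ds` is at most `η`. -/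
theorem stmt2
    {Z : Type*} [TopologicalSpace Z] [PolishSpace Z] [LocallyCompactSpace Z]
    [MeasurableSpace Z] [BorelSpace Z]
    (ν : Measure Z) [IsFiniteMeasureOnCompacts ν] [SigmaFinite ν]
    (T : ℝ) (hT : 0 < T)
    (ℓ : ℝ → ℝ) (hℓ : ∀ r : ℝ, 0 ≤ r → ℓ r = r * Real.log r - r + 1)
    (g : Z → ℝ) (hgmeas : Measurable g)
    (hgL2 : ∫⁻ z, ENNReal.ofReal (g z ^ 2) ∂ν < ⊤)
    (hgexp : ∃ δ : ℝ, 0 < δ ∧ ∀ E : Set Z, MeasurableSet E → ν E < ⊤ →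
        ∫⁻ z in E, ENNReal.ofReal (Real.exp (δ * g z ^ 2)) ∂ν < ⊤)
    (N : ℝ) (hN : 0 < N) (η : ℝ) (hη : 0 < η) :
    ∃ δ₀ : ℝ, 0 < δ₀ ∧ ∀ A : Set ℝ, MeasurableSet A → A ⊆ Icc (0 : ℝ) T →
      volume A < ENNReal.ofReal δ₀ →
      (⨆ φ ∈ {φ : ℝ × Z → ℝ | Measurable φ ∧ (∀ p, 0 ≤ φ p) ∧
          ∫⁻ s in Icc (0 : ℝ) T, ∫⁻ z, ENNReal.ofReal (ℓ (φ (s, z))) ∂ν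
            ≤ ENNReal.ofReal N},
        ∫⁻ s in A, ∫⁻ z, ENNReal.ofReal (|g z| * |φ (s, z) - 1|) ∂ν)
        ≤ ENNReal.ofReal η :=
  stmt2_general ν T ℓ hℓ g hgmeas hgL2 hgexp N hN η hη
end

section
/- Let N > 0 and let φ_n, φ belong to S^N, and assume that for every continuous compactly supported function f : [0,T] × Z → ℝ one has ∫₀^T ∫_Z f(s,z) φ_n(s,z) ν(dz) ds → ∫₀^T ∫_Z f(s,z) φ(s,z) ν(dz) ds as n → ∞. Then ∫₀^T ∫_Z h(z) (φ_n(s,z) − 1) ν(dz) ds converges, as n → ∞, to ∫₀^T ∫_Z h(z) (φ(s,z) − 1) ν(dz) ds. -/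
/-!
By the Fenchel–Young inequality for `klFun` (whose conjugate is `exp b - 1`),
`|b| |a - 1| ≤ klFun a + b² exp |b|`. Applied with `b = c (h - ψ)`, it bounds
`∫∫ |h - ψ| |φ - 1|` on the entropy ball `S^N` by `(N + T ∫ (c (h - ψ))² exp |c (h - ψ)| dν) / c`,
uniformly in `φ`. Taking `c` large and then, thanks to the exponential moments of `h`, a continuous
compactly supported `ψ` that makes the last integral small (truncate `h` where its tail is
negligible, approximate the bounded part in `L²`), `h` may be replaced by `ψ` uniformly in `n`.
For `ψ` the convergence is the hypothesis tested against `χ(s) ψ(z)` with `χ = 1` on `[0, T]`.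
-/

open MeasureTheory Set Filter Topology Real InformationTheory
open scoped ENNReal

lemma abs_sub_max_min_le {M x y : ℝ} (hy : |y| ≤ M) : |y - max (-M) (min M x)| ≤ |y - x| := by
  have hclamp : max (-M) (min M y) = y := by
    rw [min_eq_right (abs_le.1 hy).2, max_eq_right (abs_le.1 hy).1]
  calc |y - max (-M) (min M x)| = |max (min M y) (-M) - max (min M x) (-M)| := by
        rw [max_comm _ (-M), max_comm _ (-M), hclamp]
    _ ≤ |min M y - min M x| := abs_max_sub_max_le_abs _ _ _
    _ ≤ |y - x| := by simpa using abs_min_sub_min_le_max M y M x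

lemma HasCompactSupport.mul_prod {X Y M : Type*} [TopologicalSpace X] [TopologicalSpace Y]
    [MulZeroClass M] {f : X → M} {g : Y → M} (hf : HasCompactSupport f) (hg : HasCompactSupport g) :
    HasCompactSupport (fun p : X × Y => f p.1 * g p.2) := by
  refine HasCompactSupport.intro' (hf.isCompact.prod hg.isCompact)
    ((isClosed_tsupport f).prod (isClosed_tsupport g)) fun p hp => ?_
  rcases not_and_or.1 (mem_prod.not.1 hp) with h | h <;>
    simp [image_eq_zero_of_notMem_tsupport h]

lemma tendsto_of_forall_approx {ι E : Type*} [PseudoMetricSpace E] {l : Filter ι} {u : ι → E}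
    {x : E} (h : ∀ ε > 0, ∃ v : ι → E, ∃ y, Tendsto v l (𝓝 y) ∧ (∀ i, dist (u i) (v i) ≤ ε) ∧
      dist x y ≤ ε) :
    Tendsto u l (𝓝 x) := by
  refine Metric.tendsto_nhds.2 fun ε hε => ?_
  obtain ⟨v, y, hv, huv, hxy⟩ := h (ε / 4) (by positivity)
  filter_upwards [Metric.tendsto_nhds.1 hv (ε / 4) (by positivity)] with i hi
  calc dist (u i) x ≤ dist (u i) (v i) + dist (v i) y + dist y x := dist_triangle4 _ _ _ _
    _ < ε := by rw [dist_comm y x]; linarith [huv i]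

def entropyBall {α : Type*} [MeasurableSpace α] (μ : Measure α) (N : ℝ) : Set (α → ℝ) :=
  {a | Measurable a ∧ (∀ x, 0 ≤ a x) ∧ ∫⁻ x, ENNReal.ofReal (klFun (a x)) ∂μ ≤ ENNReal.ofReal N}

noncomputable def sqMulExpAbs (y : ℝ) : ℝ := y ^ 2 * exp |y|

@[fun_prop]
lemma continuous_sqMulExpAbs : Continuous sqMulExpAbs := by
  unfold sqMulExpAbs; fun_prop

lemma sq_le_sqMulExpAbs (y : ℝ) : y ^ 2 ≤ sqMulExpAbs y :=
  le_mul_of_one_le_right (sq_nonneg y) (one_le_exp (abs_nonneg y))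

lemma sqMulExpAbs_le_sqMulExpAbs {x y : ℝ} (hxy : |x| ≤ |y|) : sqMulExpAbs x ≤ sqMulExpAbs y := by
  unfold sqMulExpAbs
  rw [← sq_abs x, ← sq_abs y]
  gcongr

lemma sqMulExpAbs_le_of_abs_le {x K : ℝ} (hx : |x| ≤ K) : sqMulExpAbs x ≤ x ^ 2 * exp K := by
  unfold sqMulExpAbs
  gcongr

lemma sqMulExpAbs_le_exp (y : ℝ) : sqMulExpAbs y ≤ exp (3 * |y|) := by
  have hy : |y| ≤ exp |y| := by linarith [add_one_le_exp |y|]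
  calc sqMulExpAbs y = |y| ^ 2 * exp |y| := by rw [sqMulExpAbs, sq_abs]
    _ ≤ exp |y| ^ 2 * exp |y| := by gcongr
    _ = exp (3 * |y|) := by rw [← exp_nat_mul, ← exp_add]; ring_nf

lemma sqMulExpAbs_mul_sub_le_of_lt {c M x y : ℝ} (hc : 0 ≤ c) (hy : |y| ≤ M) (hx : M < |x|) :
    sqMulExpAbs (c * (x - y)) ≤ sqMulExpAbs (2 * c * x) := by
  refine sqMulExpAbs_le_sqMulExpAbs ?_
  rw [abs_mul, abs_mul, abs_mul, abs_of_nonneg hc, abs_two]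
  nlinarith [abs_sub x y]

lemma sqMulExpAbs_mul_sub_le_of_le {c M x y : ℝ} (hc : 0 ≤ c) (hy : |y| ≤ M) (hx : |x| ≤ M) :
    sqMulExpAbs (c * (x - y)) ≤ c ^ 2 * exp (2 * c * M) * (x - y) ^ 2 := by
  refine (sqMulExpAbs_le_of_abs_le ?_).trans_eq (by ring)
  rw [abs_mul, abs_of_nonneg hc]
  nlinarith [abs_sub x y]

/-- Fenchel–Young inequality: `exp b - 1` is the convex conjugate of `klFun`. -/
lemma mul_le_klFun_add_exp_sub_one {a : ℝ} (ha : 0 ≤ a) (b : ℝ) :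
    a * b ≤ klFun a + (exp b - 1) := by
  rcases ha.eq_or_lt with rfl | ha
  · simp [klFun_zero, (exp_pos b).le]
  · have h := add_one_le_exp (b - log a)
    rw [exp_sub, exp_log ha, le_div_iff₀ ha] at h
    rw [klFun_apply]
    linarith

lemma exp_sub_one_sub_le_sq_mul_exp_abs (x : ℝ) : exp x - 1 - x ≤ x ^ 2 * exp |x| := by
  have hle : exp x * (1 - x) ≤ 1 :=
    calc exp x * (1 - x) ≤ exp x * exp (-x) := by gcongr; linarith [add_one_le_exp (-x)]
      _ = 1 := by rw [← exp_add, add_neg_cancel, exp_zero]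
  rcases le_total 0 x with hx | hx
  · rw [abs_of_nonneg hx]
    nlinarith [exp_pos x]
  · rw [abs_of_nonpos hx]
    have hmul : (exp x - 1 - x) * (1 - x) ≤ x ^ 2 * exp (-x) * (1 - x) := by
      nlinarith [add_one_le_exp (-x), mul_nonneg (sq_nonneg x) (neg_nonneg.2 hx)]
    exact le_of_mul_le_mul_right hmul (by linarith)

lemma abs_mul_abs_sub_one_le {a : ℝ} (ha : 0 ≤ a) (b : ℝ) :
    |b| * |a - 1| ≤ klFun a + sqMulExpAbs b := by
  rw [sqMulExpAbs, ← sq_abs b]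
  rcases le_total 0 (a - 1) with h | h
  · have hyoung := mul_le_klFun_add_exp_sub_one ha |b|
    have hexp := exp_sub_one_sub_le_sq_mul_exp_abs |b|
    rw [abs_abs] at hexp
    rw [abs_of_nonneg h]
    linarith
  · have hyoung := mul_le_klFun_add_exp_sub_one ha (-|b|)
    have hexp := exp_sub_one_sub_le_sq_mul_exp_abs (-|b|)
    rw [abs_neg, abs_abs, neg_sq] at hexp
    rw [abs_of_nonpos h]
    linarith

section Integral

variable {α : Type*} [MeasurableSpace α] {μ : Measure α}

lemma lintegral_ofReal_sq_eq_eLpNorm_sq (f : α → ℝ) :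
    ∫⁻ x, ENNReal.ofReal (f x ^ 2) ∂μ = eLpNorm f 2 μ ^ 2 := by
  have h := eLpNorm_nnreal_pow_eq_lintegral (f := f) (μ := μ) (p := 2) two_ne_zero
  simp only [NNReal.coe_ofNat, ENNReal.coe_ofNat] at h
  rw [← ENNReal.rpow_natCast, Nat.cast_ofNat, h]
  refine lintegral_congr fun x => ?_
  rw [Real.enorm_eq_ofReal_abs, ENNReal.ofReal_rpow_of_nonneg (abs_nonneg _) zero_le_two]
  norm_num

lemma memLp_two_of_lintegral_sq_lt_top {f : α → ℝ} (hf : Measurable f)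
    (h : ∫⁻ x, ENNReal.ofReal (f x ^ 2) ∂μ < ⊤) : MemLp f 2 μ := by
  refine ⟨hf.aestronglyMeasurable, ?_⟩
  rw [lintegral_ofReal_sq_eq_eLpNorm_sq] at h
  exact (ENNReal.pow_lt_top_iff.1 h).resolve_right two_ne_zero

lemma lintegral_abs_mul_abs_sub_one_le (g : α → ℝ) {a : α → ℝ} (ha : Measurable a)
    (ha0 : ∀ x, 0 ≤ a x) :
    ∫⁻ x, ENNReal.ofReal (|g x| * |a x - 1|) ∂μ
      ≤ ∫⁻ x, ENNReal.ofReal (klFun (a x)) ∂μ + ∫⁻ x, ENNReal.ofReal (sqMulExpAbs (g x)) ∂μ :=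
  calc _ ≤ ∫⁻ x, (ENNReal.ofReal (klFun (a x)) + ENNReal.ofReal (sqMulExpAbs (g x))) ∂μ :=
        lintegral_mono fun x =>
          (ENNReal.ofReal_le_ofReal (abs_mul_abs_sub_one_le (ha0 x) _)).trans ENNReal.ofReal_add_le
    _ = _ := lintegral_add_left (measurable_klFun.comp ha).ennreal_ofReal _

lemma dist_integral_mul_sub_one_le {f g a : α → ℝ} {ε : ℝ}
    (hf : Integrable (fun x => f x * (a x - 1)) μ) (hg : Integrable (fun x => g x * (a x - 1)) μ)
    (hε : 0 ≤ ε) (hfg : ∫⁻ x, ENNReal.ofReal (|f x - g x| * |a x - 1|) ∂μ ≤ ENNReal.ofReal ε) :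
    dist (∫ x, f x * (a x - 1) ∂μ) (∫ x, g x * (a x - 1) ∂μ) ≤ ε := by
  rw [dist_eq_norm, ← integral_sub hf hg]
  refine (norm_integral_le_lintegral_norm _).trans (ENNReal.toReal_le_of_le_ofReal hε ?_)
  simpa only [← sub_mul, norm_mul, Real.norm_eq_abs] using hfg

end Integral

lemma lintegral_prod_snd {X Y : Type*} [MeasurableSpace X] [MeasurableSpace Y]
    (ρ : Measure X) (ν : Measure Y) [SFinite ν] {f : Y → ℝ≥0∞} (hf : Measurable f) :
    ∫⁻ p, f p.2 ∂(ρ.prod ν) = ρ univ * ∫⁻ y, f y ∂ν := by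
  rw [← lintegral_map hf measurable_snd, Measure.map_snd_prod, lintegral_smul_measure, smul_eq_mul]

section EntropyBall

variable {X Z : Type*} [MeasurableSpace X] [MeasurableSpace Z] {ρ : Measure X} {ν : Measure Z}
  {N : ℝ}

lemma mem_entropyBall_prod [SFinite ν] {ℓ : ℝ → ℝ}
    (hℓ : ∀ r : ℝ, 0 ≤ r → ℓ r = r * log r - r + 1) {a : X × Z → ℝ}
    (ha : Measurable a ∧ (∀ p, 0 ≤ a p) ∧
      ∫⁻ x, ∫⁻ z, ENNReal.ofReal (ℓ (a (x, z))) ∂ν ∂ρ ≤ ENNReal.ofReal N) :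
    a ∈ entropyBall (ρ.prod ν) N := by
  obtain ⟨ha, ha0, hN⟩ := ha
  refine ⟨ha, ha0, ?_⟩
  rw [lintegral_prod _ (by fun_prop)]
  convert hN using 6 with x z
  rw [hℓ _ (ha0 _), klFun_apply]
  ring

lemma ofReal_mul_lintegral_abs_mul_abs_sub_one_le [SFinite ν] {g : Z → ℝ} (hg : Measurable g)
    {a : X × Z → ℝ} (ha : a ∈ entropyBall (ρ.prod ν) N) {c : ℝ} (hc : 0 ≤ c) :
    ENNReal.ofReal c * ∫⁻ p, ENNReal.ofReal (|g p.2| * |a p - 1|) ∂(ρ.prod ν)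
      ≤ ENNReal.ofReal N + ρ univ * ∫⁻ z, ENNReal.ofReal (sqMulExpAbs (c * g z)) ∂ν := by
  obtain ⟨ha, ha0, hN⟩ := ha
  rw [← lintegral_const_mul' _ _ ENNReal.ofReal_ne_top, ← lintegral_prod_snd ρ ν (by fun_prop)]
  calc ∫⁻ p, ENNReal.ofReal c * ENNReal.ofReal (|g p.2| * |a p - 1|) ∂(ρ.prod ν)
      = ∫⁻ p, ENNReal.ofReal (|c * g p.2| * |a p - 1|) ∂(ρ.prod ν) := by
        refine lintegral_congr fun p => ?_
        rw [← ENNReal.ofReal_mul hc, abs_mul, abs_of_nonneg hc, mul_assoc]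
    _ ≤ _ := (lintegral_abs_mul_abs_sub_one_le _ ha ha0).trans (add_le_add_left hN _)

lemma integrable_mul_sub_one [SFinite ν] [IsFiniteMeasure ρ] {g : Z → ℝ} (hg : Measurable g)
    (hgG : ∫⁻ z, ENNReal.ofReal (sqMulExpAbs (g z)) ∂ν < ⊤) {a : X × Z → ℝ}
    (ha : a ∈ entropyBall (ρ.prod ν) N) :
    Integrable (fun p => g p.2 * (a p - 1)) (ρ.prod ν) := by
  refine ⟨((hg.comp measurable_snd).mul (ha.1.sub_const 1)).aestronglyMeasurable,
    (hasFiniteIntegral_iff_norm _).2 ?_⟩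
  have h := ofReal_mul_lintegral_abs_mul_abs_sub_one_le hg ha zero_le_one
  simp only [ENNReal.ofReal_one, one_mul] at h
  simp only [norm_mul, Real.norm_eq_abs]
  exact h.trans_lt (ENNReal.add_lt_top.2
    ⟨ENNReal.ofReal_lt_top, ENNReal.mul_lt_top (measure_lt_top _ _) hgG⟩)

end EntropyBall

section Approximation

variable {Z : Type*} [MeasurableSpace Z] {ν : Measure Z}

lemma lintegral_sqMulExpAbs_mul_lt_top {h : Z → ℝ} (hh : Measurable h)
    (hL2 : ∫⁻ z, ENNReal.ofReal (h z ^ 2) ∂ν < ⊤)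
    (hexp : ∀ δ : ℝ, 0 < δ → ∀ E : Set Z, MeasurableSet E → ν E < ⊤ →
      ∫⁻ z in E, ENNReal.ofReal (exp (δ * |h z|)) ∂ν < ⊤)
    {c : ℝ} (hc : 0 < c) :
    ∫⁻ z, ENNReal.ofReal (sqMulExpAbs (c * h z)) ∂ν < ⊤ := by
  set E := {z | 1 < |h z|}
  have hE : MeasurableSet E := measurableSet_lt measurable_const hh.abs
  have hνE : ν E < ⊤ := by
    refine lt_of_le_of_lt ?_ hL2
    calc ν E = ∫⁻ _ in E, 1 ∂ν := (setLIntegral_one E).symm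
      _ ≤ ∫⁻ z in E, ENNReal.ofReal (h z ^ 2) ∂ν := setLIntegral_mono (by fun_prop) fun z hz =>
          ENNReal.one_le_ofReal.2 (by nlinarith [sq_abs (h z), show 1 < |h z| from hz])
      _ ≤ _ := setLIntegral_le_lintegral _ _
  rw [← lintegral_add_compl _ hE]
  refine ENNReal.add_lt_top.2 ⟨?_, ?_⟩
  · refine lt_of_le_of_lt (setLIntegral_mono (by fun_prop) fun z _ => ?_)
      (hexp (3 * c) (by positivity) E hE hνE)
    refine ENNReal.ofReal_le_ofReal ((sqMulExpAbs_le_exp _).trans_eq ?_)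
    rw [abs_mul, abs_of_pos hc, mul_assoc]
  · calc ∫⁻ z in Eᶜ, ENNReal.ofReal (sqMulExpAbs (c * h z)) ∂ν
        ≤ ∫⁻ z in Eᶜ, ENNReal.ofReal (c ^ 2 * exp c) * ENNReal.ofReal (h z ^ 2) ∂ν := by
          refine setLIntegral_mono (by fun_prop) fun z hz => ?_
          have hz : |h z| ≤ 1 := not_lt.1 hz
          rw [← ENNReal.ofReal_mul (by positivity)]
          refine ENNReal.ofReal_le_ofReal ((sqMulExpAbs_le_of_abs_le ?_).trans_eq (by ring))
          rw [abs_mul, abs_of_pos hc]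
          nlinarith
      _ ≤ ∫⁻ z, ENNReal.ofReal (c ^ 2 * exp c) * ENNReal.ofReal (h z ^ 2) ∂ν :=
          setLIntegral_le_lintegral _ _
      _ < ⊤ := by
          rw [lintegral_const_mul' _ _ ENNReal.ofReal_ne_top]
          exact ENNReal.mul_lt_top ENNReal.ofReal_lt_top hL2

lemma exists_setLIntegral_abs_gt_lt {f : Z → ℝ≥0∞} (hf : ∫⁻ z, f z ∂ν ≠ ⊤) {h : Z → ℝ}
    (hh : Measurable h) {η : ℝ≥0∞} (hη : 0 < η) :
    ∃ M : ℕ, ∫⁻ z in {z | (M : ℝ) < |h z|}, f z ∂ν < η := by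
  have := isFiniteMeasure_withDensity hf
  have hs (M : ℕ) : MeasurableSet {z | (M : ℝ) < |h z|} :=
    measurableSet_lt measurable_const hh.abs
  have hlim := tendsto_measure_iInter_atTop (μ := ν.withDensity f)
    (fun M => (hs M).nullMeasurableSet)
    (fun m n hmn z hz => show (m : ℝ) < |h z| from (Nat.cast_le.2 hmn).trans_lt hz)
    ⟨0, measure_ne_top _ _⟩
  have hempty : ⋂ M : ℕ, {z | (M : ℝ) < |h z|} = ∅ := by
    ext z
    simpa using exists_nat_ge |h z|
  rw [hempty, measure_empty] at hlim
  obtain ⟨M, hM⟩ := (hlim.eventually (gt_mem_nhds hη)).exists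
  exact ⟨M, by rwa [Function.comp_apply, withDensity_apply _ (hs M)] at hM⟩

lemma lintegral_sqMulExpAbs_mul_sub_le {h ψ : Z → ℝ} (hh : Measurable h) {c M : ℝ} (hc : 0 ≤ c)
    (hψM : ∀ z, |ψ z| ≤ M) :
    ∫⁻ z, ENNReal.ofReal (sqMulExpAbs (c * (h z - ψ z))) ∂ν
      ≤ ∫⁻ z in {z | M < |h z|}, ENNReal.ofReal (sqMulExpAbs (2 * c * h z)) ∂ν
        + ENNReal.ofReal (c ^ 2 * exp (2 * c * M))
          * ∫⁻ z, ENNReal.ofReal (({z | M < |h z|}ᶜ.indicator h z - ψ z) ^ 2) ∂ν := by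
  set S := {z | M < |h z|}
  have hS : MeasurableSet S := measurableSet_lt measurable_const hh.abs
  have hpt (z : Z) : ENNReal.ofReal (sqMulExpAbs (c * (h z - ψ z)))
      ≤ S.indicator (fun z => ENNReal.ofReal (sqMulExpAbs (2 * c * h z))) z
        + ENNReal.ofReal (c ^ 2 * exp (2 * c * M))
          * ENNReal.ofReal ((Sᶜ.indicator h z - ψ z) ^ 2) := by
    by_cases hz : z ∈ S
    · rw [indicator_of_mem hz]
      exact le_add_right (ENNReal.ofReal_le_ofReal (sqMulExpAbs_mul_sub_le_of_lt hc (hψM z) hz))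
    · rw [indicator_of_notMem hz, indicator_of_mem (show z ∈ Sᶜ from hz), zero_add,
        ← ENNReal.ofReal_mul (by positivity)]
      exact ENNReal.ofReal_le_ofReal (sqMulExpAbs_mul_sub_le_of_le hc (hψM z) (not_lt.1 hz))
  refine (lintegral_mono hpt).trans_eq ?_
  rw [lintegral_add_left ((by fun_prop : Measurable fun z =>
    ENNReal.ofReal (sqMulExpAbs (2 * c * h z))).indicator hS), lintegral_indicator hS,
    lintegral_const_mul' _ _ ENNReal.ofReal_ne_top]

variable [TopologicalSpace Z] [NormalSpace Z] [BorelSpace Z] [R1Space Z]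
  [WeaklyLocallyCompactSpace Z] [ν.Regular]

lemma MemLp.exists_hasCompactSupport_abs_le_lintegral_sq_sub_le {g : Z → ℝ} (hg : MemLp g 2 ν)
    {M : ℝ} (hM : 0 ≤ M) (hgM : ∀ z, |g z| ≤ M) {η : ℝ} (hη : 0 < η) :
    ∃ ψ : Z → ℝ, Continuous ψ ∧ HasCompactSupport ψ ∧ (∀ z, |ψ z| ≤ M) ∧
      ∫⁻ z, ENNReal.ofReal ((g z - ψ z) ^ 2) ∂ν ≤ ENNReal.ofReal η := by
  obtain ⟨ψ, hψs, hψη, hψc, -⟩ := hg.exists_hasCompactSupport_eLpNorm_sub_le ENNReal.ofNat_ne_top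
    (ε := ENNReal.ofReal √η) (by simpa using hη)
  refine ⟨fun z => max (-M) (min M (ψ z)), by fun_prop,
    hψs.comp_left (g := fun x => max (-M) (min M x)) (by simp [hM]),
    fun z => abs_le.2 ⟨le_max_left _ _, max_le (by linarith) (min_le_left _ _)⟩, ?_⟩
  calc ∫⁻ z, ENNReal.ofReal ((g z - max (-M) (min M (ψ z))) ^ 2) ∂ν
      ≤ ∫⁻ z, ENNReal.ofReal ((g - ψ) z ^ 2) ∂ν := lintegral_mono fun z =>
        ENNReal.ofReal_le_ofReal (sq_le_sq.2 (abs_sub_max_min_le (hgM z)))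
    _ = eLpNorm (g - ψ) 2 ν ^ 2 := lintegral_ofReal_sq_eq_eLpNorm_sq _
    _ ≤ ENNReal.ofReal √η ^ 2 := by gcongr
    _ = ENNReal.ofReal η := by rw [← ENNReal.ofReal_pow (sqrt_nonneg _), sq_sqrt hη.le]

lemma exists_continuous_lintegral_sqMulExpAbs_sub_le {h : Z → ℝ} (hh : Measurable h)
    (hG : ∀ c : ℝ, 0 < c → ∫⁻ z, ENNReal.ofReal (sqMulExpAbs (c * h z)) ∂ν < ⊤)
    {c η : ℝ} (hc : 0 < c) (hη : 0 < η) :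
    ∃ ψ : Z → ℝ, Continuous ψ ∧ HasCompactSupport ψ ∧
      ∫⁻ z, ENNReal.ofReal (sqMulExpAbs (c * (h z - ψ z))) ∂ν ≤ ENNReal.ofReal η := by
  obtain ⟨M, hM⟩ := exists_setLIntegral_abs_gt_lt (hG (2 * c) (by positivity)).ne hh
    (ENNReal.ofReal_pos.2 (half_pos hη))
  set S := {z | (M : ℝ) < |h z|}
  have hS : MeasurableSet S := measurableSet_lt measurable_const hh.abs
  have hL2 : MemLp h 2 ν := memLp_two_of_lintegral_sq_lt_top hh <|
    (lintegral_mono fun z => ENNReal.ofReal_le_ofReal (sq_le_sqMulExpAbs _)).trans_lt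
      (by simpa using hG 1 one_pos)
  have hbdd (z : Z) : |Sᶜ.indicator h z| ≤ M := by
    by_cases hz : z ∈ S <;> simp_all [S]
  set K := c ^ 2 * exp (2 * c * M)
  have hK : 0 < K := by positivity
  obtain ⟨ψ, hψc, hψs, hψM, hψη⟩ := MemLp.exists_hasCompactSupport_abs_le_lintegral_sq_sub_le
    (hL2.indicator hS.compl) (Nat.cast_nonneg M) hbdd (η := η / (2 * K)) (by positivity)
  refine ⟨ψ, hψc, hψs, ?_⟩
  calc ∫⁻ z, ENNReal.ofReal (sqMulExpAbs (c * (h z - ψ z))) ∂ν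
      ≤ ∫⁻ z in S, ENNReal.ofReal (sqMulExpAbs (2 * c * h z)) ∂ν
          + ENNReal.ofReal K * ∫⁻ z, ENNReal.ofReal ((Sᶜ.indicator h z - ψ z) ^ 2) ∂ν :=
        lintegral_sqMulExpAbs_mul_sub_le hh hc.le hψM
    _ ≤ ENNReal.ofReal (η / 2) + ENNReal.ofReal K * ENNReal.ofReal (η / (2 * K)) := by
        gcongr
    _ = ENNReal.ofReal η := by
        rw [← ENNReal.ofReal_mul hK.le, ← ENNReal.ofReal_add (by positivity) (by positivity)]
        congr 1
        field_simp
        norm_num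

end Approximation

section WeakConvergence

variable {X Z : Type*} [MeasurableSpace X] [MeasurableSpace Z] [TopologicalSpace Z]
  {ν : Measure Z} {N : ℝ}

lemma HasCompactSupport.lintegral_sqMulExpAbs_lt_top [OpensMeasurableSpace Z]
    [IsFiniteMeasureOnCompacts ν] {ψ : Z → ℝ} (hψs : HasCompactSupport ψ) (hψ : Continuous ψ) :
    ∫⁻ z, ENNReal.ofReal (sqMulExpAbs (ψ z)) ∂ν < ⊤ :=
  ((continuous_sqMulExpAbs.comp hψ).integrable_of_hasCompactSupport
    (hψs.comp_left (by simp [sqMulExpAbs]))).lintegral_lt_top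

lemma exists_continuous_forall_mem_entropyBall_lintegral_le [NormalSpace Z] [BorelSpace Z]
    [R1Space Z] [WeaklyLocallyCompactSpace Z] [ν.Regular] [SFinite ν] {ρ : Measure X}
    [IsFiniteMeasure ρ] {h : Z → ℝ} (hh : Measurable h)
    (hG : ∀ c : ℝ, 0 < c → ∫⁻ z, ENNReal.ofReal (sqMulExpAbs (c * h z)) ∂ν < ⊤)
    (N : ℝ) {ε : ℝ} (hε : 0 < ε) :
    ∃ ψ : Z → ℝ, Continuous ψ ∧ HasCompactSupport ψ ∧ ∀ a ∈ entropyBall (ρ.prod ν) N,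
      ∫⁻ p, ENNReal.ofReal (|h p.2 - ψ p.2| * |a p - 1|) ∂(ρ.prod ν) ≤ ENNReal.ofReal ε := by
  set B := max N 1
  have hB : 0 < B := lt_max_of_lt_right one_pos
  set c := 2 * B / ε
  have hc : 0 < c := by positivity
  set R := ρ.real univ
  obtain ⟨ψ, hψc, hψs, hψ⟩ := exists_continuous_lintegral_sqMulExpAbs_sub_le hh hG hc
    (η := B / (R + 1)) (by positivity)
  refine ⟨ψ, hψc, hψs, fun a ha => ?_⟩
  rw [← ENNReal.mul_le_mul_iff_right (ENNReal.ofReal_pos.2 hc).ne' ENNReal.ofReal_ne_top,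
    ← ENNReal.ofReal_mul hc.le]
  calc ENNReal.ofReal c * ∫⁻ p, ENNReal.ofReal (|h p.2 - ψ p.2| * |a p - 1|) ∂(ρ.prod ν)
      ≤ ENNReal.ofReal N + ρ univ * ∫⁻ z, ENNReal.ofReal (sqMulExpAbs (c * (h z - ψ z))) ∂ν :=
        ofReal_mul_lintegral_abs_mul_abs_sub_one_le (hh.sub hψc.measurable) ha hc.le
    _ ≤ ENNReal.ofReal B + ENNReal.ofReal R * ENNReal.ofReal (B / (R + 1)) := by
        rw [← ofReal_measureReal (measure_ne_top ρ univ)]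
        gcongr
        exact le_max_left N 1
    _ ≤ ENNReal.ofReal (c * ε) := by
        rw [← ENNReal.ofReal_mul measureReal_nonneg,
          ← ENNReal.ofReal_add hB.le (by positivity)]
        refine ENNReal.ofReal_le_ofReal ?_
        have : R * (B / (R + 1)) ≤ B := by
          rw [mul_div_assoc', div_le_iff₀ (by positivity)]
          nlinarith [measureReal_nonneg (μ := ρ) (s := univ)]
        simp only [c, div_mul_cancel₀ _ hε.ne']
        linarith

lemma tendsto_integral_mul_sub_one_of_tendsto_continuous [TopologicalSpace X] [RegularSpace X]
    [LocallyCompactSpace X] [OpensMeasurableSpace Z] [SFinite ν] [IsFiniteMeasureOnCompacts ν]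
    {ρ : Measure X} {K : Set X} (hK : IsCompact K) (hKm : MeasurableSet K)
    [IsFiniteMeasure (ρ.restrict K)] {φn : ℕ → X × Z → ℝ} {φ : X × Z → ℝ}
    (hφn : ∀ n, φn n ∈ entropyBall ((ρ.restrict K).prod ν) N)
    (hφ : φ ∈ entropyBall ((ρ.restrict K).prod ν) N)
    (hconv : ∀ f : X × Z → ℝ, Continuous f → HasCompactSupport f →
      Tendsto (fun n => ∫ x in K, ∫ z, f (x, z) * φn n (x, z) ∂ν ∂ρ) atTop
        (𝓝 (∫ x in K, ∫ z, f (x, z) * φ (x, z) ∂ν ∂ρ)))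
    {ψ : Z → ℝ} (hψ : Continuous ψ) (hψs : HasCompactSupport ψ) :
    Tendsto (fun n => ∫ p, ψ p.2 * (φn n p - 1) ∂((ρ.restrict K).prod ν)) atTop
      (𝓝 (∫ p, ψ p.2 * (φ p - 1) ∂((ρ.restrict K).prod ν))) := by
  set μ := (ρ.restrict K).prod ν
  obtain ⟨χ, hχK, -, hχs, -⟩ := exists_continuous_one_zero_of_isCompact hK isClosed_empty
    (disjoint_empty K)
  have hψint : Integrable (fun p : X × Z => ψ p.2) μ :=
    (hψ.integrable_of_hasCompactSupport hψs).comp_snd _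
  have key : ∀ a ∈ entropyBall μ N, ∫ p, ψ p.2 * (a p - 1) ∂μ
      = (∫ x in K, ∫ z, χ x * ψ z * a (x, z) ∂ν ∂ρ) - ∫ p, ψ p.2 ∂μ := by
    intro a ha
    have hint := integrable_mul_sub_one hψ.measurable (hψs.lintegral_sqMulExpAbs_lt_top hψ) ha
    rw [eq_sub_iff_add_eq, ← integral_add hint hψint]
    calc ∫ p, (ψ p.2 * (a p - 1) + ψ p.2) ∂μ = ∫ p, ψ p.2 * a p ∂μ := by
          simp only [mul_sub, mul_one, sub_add_cancel]
      _ = ∫ x in K, ∫ z, ψ z * a (x, z) ∂ν ∂ρ :=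
          integral_prod _
            ((hint.add hψint).congr (.of_forall fun p => by simp only [Pi.add_apply]; ring))
      _ = ∫ x in K, ∫ z, χ x * ψ z * a (x, z) ∂ν ∂ρ :=
          setIntegral_congr_fun hKm fun x hx => by simp [hχK hx]
  rw [key φ hφ]
  exact ((hconv _ (by fun_prop) (hχs.mul_prod hψs)).sub_const _).congr
    fun n => (key _ (hφn n)).symm

end WeakConvergence

theorem stmt3_general
    {Z : Type*} [TopologicalSpace Z] [PolishSpace Z] [LocallyCompactSpace Z]
    [MeasurableSpace Z] [BorelSpace Z]
    (ν : Measure Z) [IsFiniteMeasureOnCompacts ν] [SigmaFinite ν]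
    (T : ℝ)
    (ℓ : ℝ → ℝ) (hℓ : ∀ r : ℝ, 0 ≤ r → ℓ r = r * Real.log r - r + 1)
    (N : ℝ)
    (h : Z → ℝ) (hhmeas : Measurable h)
    (hhL2 : ∫⁻ z, ENNReal.ofReal (h z ^ 2) ∂ν < ⊤)
    (hhexp : ∀ δ : ℝ, 0 < δ → ∀ E : Set Z, MeasurableSet E → ν E < ⊤ →
        ∫⁻ z in E, ENNReal.ofReal (Real.exp (δ * |h z|)) ∂ν < ⊤)
    (φn : ℕ → ℝ × Z → ℝ) (φ : ℝ × Z → ℝ)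
    (hφn : ∀ n, Measurable (φn n) ∧ (∀ p, 0 ≤ φn n p) ∧
        ∫⁻ s in Icc (0 : ℝ) T, ∫⁻ z, ENNReal.ofReal (ℓ (φn n (s, z))) ∂ν
          ≤ ENNReal.ofReal N)
    (hφ : Measurable φ ∧ (∀ p, 0 ≤ φ p) ∧
        ∫⁻ s in Icc (0 : ℝ) T, ∫⁻ z, ENNReal.ofReal (ℓ (φ (s, z))) ∂ν
          ≤ ENNReal.ofReal N)
    (hconv : ∀ f : ℝ × Z → ℝ, Continuous f → HasCompactSupport f →
        Tendsto (fun n => ∫ s in Icc (0 : ℝ) T, ∫ z, f (s, z) * φn n (s, z) ∂ν) atTop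
          (𝓝 (∫ s in Icc (0 : ℝ) T, ∫ z, f (s, z) * φ (s, z) ∂ν))) :
    Tendsto (fun n => ∫ s in Icc (0 : ℝ) T, ∫ z, h z * (φn n (s, z) - 1) ∂ν) atTop
      (𝓝 (∫ s in Icc (0 : ℝ) T, ∫ z, h z * (φ (s, z) - 1) ∂ν)) := by
  set μ := (volume.restrict (Icc (0 : ℝ) T)).prod ν
  have hφn' (n : ℕ) : φn n ∈ entropyBall μ N := mem_entropyBall_prod hℓ (hφn n)
  have hφ' : φ ∈ entropyBall μ N := mem_entropyBall_prod hℓ hφ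
  have hG (c : ℝ) (hc : 0 < c) : ∫⁻ z, ENNReal.ofReal (sqMulExpAbs (c * h z)) ∂ν < ⊤ :=
    lintegral_sqMulExpAbs_mul_lt_top hhmeas hhL2 hhexp hc
  have hint {g : Z → ℝ} (hg : Measurable g) (hgG : ∫⁻ z, ENNReal.ofReal (sqMulExpAbs (g z)) ∂ν < ⊤)
      {a : ℝ × Z → ℝ} (ha : a ∈ entropyBall μ N) :
      Integrable (fun p => g p.2 * (a p - 1)) μ :=
    integrable_mul_sub_one (ρ := volume.restrict (Icc (0 : ℝ) T)) hg hgG ha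
  have hhG : ∫⁻ z, ENNReal.ofReal (sqMulExpAbs (h z)) ∂ν < ⊤ := by simpa using hG 1 one_pos
  rw [← integral_prod _ (hint hhmeas hhG hφ')]
  refine Tendsto.congr (fun n => integral_prod _ (hint hhmeas hhG (hφn' n)))
    (tendsto_of_forall_approx fun ε hε => ?_)
  obtain ⟨ψ, hψ, hψs, hψε⟩ := exists_continuous_forall_mem_entropyBall_lintegral_le
    (ρ := volume.restrict (Icc (0 : ℝ) T)) hhmeas hG N hε
  have hψG := hψs.lintegral_sqMulExpAbs_lt_top (ν := ν) hψ
  exact ⟨_, _, tendsto_integral_mul_sub_one_of_tendsto_continuous isCompact_Icc measurableSet_Icc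
      hφn' hφ' hconv hψ hψs,
    fun n => dist_integral_mul_sub_one_le (hint hhmeas hhG (hφn' n))
      (hint hψ.measurable hψG (hφn' n)) hε.le (hψε _ (hφn' n)),
    dist_integral_mul_sub_one_le (hint hhmeas hhG hφ') (hint hψ.measurable hψG hφ') hε.le
      (hψε _ hφ')⟩

/-- If `φ_n, φ ∈ S^N` and `∫₀^T ∫_Z f φ_n dν ds → ∫₀^T ∫_Z f φ dν ds` for every continuous
compactly supported `f`, then `∫₀^T ∫_Z h (φ_n − 1) dν ds → ∫₀^T ∫_Z h (φ − 1) dν ds`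
for `h` square-integrable with exponential moments on finite-measure sets. -/
theorem stmt3
    {Z : Type*} [TopologicalSpace Z] [PolishSpace Z] [LocallyCompactSpace Z]
    [MeasurableSpace Z] [BorelSpace Z]
    (ν : Measure Z) [IsFiniteMeasureOnCompacts ν] [SigmaFinite ν]
    (T : ℝ) (hT : 0 < T)
    (ℓ : ℝ → ℝ) (hℓ : ∀ r : ℝ, 0 ≤ r → ℓ r = r * Real.log r - r + 1)
    (N : ℝ) (hN : 0 < N)
    (h : Z → ℝ) (hhmeas : Measurable h)
    (hhL2 : ∫⁻ z, ENNReal.ofReal (h z ^ 2) ∂ν < ⊤)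
    (hhexp : ∀ δ : ℝ, 0 < δ → ∀ E : Set Z, MeasurableSet E → ν E < ⊤ →
        ∫⁻ z in E, ENNReal.ofReal (Real.exp (δ * |h z|)) ∂ν < ⊤)
    (φn : ℕ → ℝ × Z → ℝ) (φ : ℝ × Z → ℝ)
    (hφn : ∀ n, Measurable (φn n) ∧ (∀ p, 0 ≤ φn n p) ∧
        ∫⁻ s in Icc (0 : ℝ) T, ∫⁻ z, ENNReal.ofReal (ℓ (φn n (s, z))) ∂ν
          ≤ ENNReal.ofReal N)
    (hφ : Measurable φ ∧ (∀ p, 0 ≤ φ p) ∧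
        ∫⁻ s in Icc (0 : ℝ) T, ∫⁻ z, ENNReal.ofReal (ℓ (φ (s, z))) ∂ν
          ≤ ENNReal.ofReal N)
    (hconv : ∀ f : ℝ × Z → ℝ, Continuous f → HasCompactSupport f →
        Tendsto (fun n => ∫ s in Icc (0 : ℝ) T, ∫ z, f (s, z) * φn n (s, z) ∂ν) atTop
          (𝓝 (∫ s in Icc (0 : ℝ) T, ∫ z, f (s, z) * φ (s, z) ∂ν))) :
    Tendsto (fun n => ∫ s in Icc (0 : ℝ) T, ∫ z, h z * (φn n (s, z) - 1) ∂ν) atTop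
      (𝓝 (∫ s in Icc (0 : ℝ) T, ∫ z, h z * (φ (s, z) - 1) ∂ν)) :=
  stmt3_general ν T ℓ hℓ N h hhmeas hhL2 hhexp φn φ hφn hφ hconv
end

section
/- Let σ > 2 be a real number and let β ∈ ℝ satisfy σ·|β| < √(2σ+1). Then for all complex numbers a and b, Re[(1 − iβ)(|a|^{2σ} a − |b|^{2σ} b) · conj(a − b)] ≥ (1 − σ|β|/√(2σ+1)) · 2^{−2σ} · |a − b|^{2σ+2}. -/
/-!
Put `m = 2σ` and `z = (|a|^m a - |b|^m b) conj (a - b)`, so that the left side is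
`Re z + β Im z`. It suffices to show `2^{-m} |a - b|^{m+2} ≤ Re z` and
`√(m+1) |Im z| ≤ (m/2) Re z`.

The first follows from `Re z = ½(|a|^m + |b|^m)|a - b|² + ½(|a|^m - |b|^m)(|a|² - |b|²)`
and convexity of `t ↦ t^m`. For the second, write `r = |a|`, `s = |b|`, `a conj b = u + iv`;
it is a Cauchy–Schwarz bound over the disc `u² + v² ≤ (rs)²`, which reduces to
`4(m+1)(rs)²(r^m - s^m)² ≤ m²(r² - s²)(r^{2m+2} - s^{2m+2})`. Substituting
`r = e^{g+x}`, `s = e^{g-x}` turns this into `4(m+1) sinh²(mx) ≤ m² sinh(2x) sinh((2m+2)x)`,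
a consequence of the monotonicity of `sinh t / t`.
-/

open Real ComplexConjugate

lemma le_of_hasDerivAt_nonneg_of_nonneg {f f' : ℝ → ℝ} (hf : ∀ x, HasDerivAt f (f' x) x)
    (hf' : ∀ x, 0 < x → 0 ≤ f' x) {y : ℝ} (hy : 0 ≤ y) : f 0 ≤ f y := by
  refine monotoneOn_of_hasDerivWithinAt_nonneg (convex_Ici 0)
    (fun x _ ↦ (hf x).continuousAt.continuousWithinAt) (fun x _ ↦ (hf x).hasDerivWithinAt)
    ?_ Set.self_mem_Ici hy hy
  simpa using hf'

lemma mul_sinh_mul_le_mul_sinh_mul {c d y : ℝ} (hd : 0 ≤ d) (hdc : d ≤ c) (hy : 0 ≤ y) :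
    c * sinh (d * y) ≤ d * sinh (c * y) := by
  have hderiv (z : ℝ) : HasDerivAt (fun z ↦ d * sinh (c * z) - c * sinh (d * z))
      (d * c * (cosh (c * z) - cosh (d * z))) z := by
    refine ((((hasDerivAt_id z).const_mul c).sinh.const_mul d).sub
      (((hasDerivAt_id z).const_mul d).sinh.const_mul c)).congr_deriv ?_
    simp only [id]; ring
  have := le_of_hasDerivAt_nonneg_of_nonneg hderiv (fun z hz ↦ ?_) hy
  · simpa using this
  have : cosh (d * z) ≤ cosh (c * z) := by
    rw [cosh_le_cosh, abs_of_nonneg (by positivity), abs_of_nonneg (by nlinarith)]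
    exact mul_le_mul_of_nonneg_right hdc hz.le
  exact mul_nonneg (mul_nonneg hd (hd.trans hdc)) (sub_nonneg.2 this)

lemma cosh_mul_le_cosh_add_two_mul {m : ℝ} (hm : 0 ≤ m) (y : ℝ) :
    (m + 2) ^ 2 * cosh (m * y) ≤ m ^ 2 * cosh ((m + 2) * y) + 4 * (m + 1) := by
  wlog hy : 0 ≤ y generalizing y
  · simpa only [mul_neg, cosh_neg] using this (-y) (by linarith)
  have hderiv (z : ℝ) : HasDerivAt
      (fun z ↦ m ^ 2 * cosh ((m + 2) * z) + 4 * (m + 1) - (m + 2) ^ 2 * cosh (m * z))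
      (m * (m + 2) * (m * sinh ((m + 2) * z) - (m + 2) * sinh (m * z))) z := by
    refine (((((hasDerivAt_id z).const_mul (m + 2)).cosh.const_mul (m ^ 2)).add_const
      (4 * (m + 1))).sub
      (((hasDerivAt_id z).const_mul m).cosh.const_mul ((m + 2) ^ 2))).congr_deriv ?_
    simp only [id]; ring
  have := le_of_hasDerivAt_nonneg_of_nonneg hderiv (fun z hz ↦ ?_) hy
  · simp only [mul_zero, cosh_zero, mul_one] at this; linarith
  have := mul_sinh_mul_le_mul_sinh_mul hm (by linarith : m ≤ m + 2) hz.le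
  exact mul_nonneg (by positivity) (sub_nonneg.2 this)

lemma sinh_mul_sq_le_sinh_mul_sinh {m : ℝ} (hm : 0 ≤ m) (x : ℝ) :
    4 * (m + 1) * sinh (m * x) ^ 2 ≤ m ^ 2 * (sinh (2 * x) * sinh ((2 * m + 2) * x)) := by
  have hadd : cosh ((m + 2) * (2 * x))
      = cosh (2 * x) * cosh ((2 * m + 2) * x) + sinh (2 * x) * sinh ((2 * m + 2) * x) := by
    rw [← cosh_add]; ring_nf
  have hsub : cosh (m * (2 * x))
      = cosh ((2 * m + 2) * x) * cosh (2 * x) - sinh ((2 * m + 2) * x) * sinh (2 * x) := by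
    rw [← cosh_sub]; ring_nf
  have hdouble : cosh (m * (2 * x)) = 2 * sinh (m * x) ^ 2 + 1 := by
    rw [show m * (2 * x) = 2 * (m * x) by ring, cosh_two_mul, cosh_sq]; ring
  linear_combination (1 / 2) * cosh_mul_le_cosh_add_two_mul hm (2 * x) + (m ^ 2 / 2) * hadd
    - ((m + 2) ^ 2 / 2 - m ^ 2 / 2) * hdouble - (m ^ 2 / 2) * hsub

lemma sq_sub_sq_mul_rpow_sub_rpow_nonneg {r s p : ℝ} (hr : 0 ≤ r) (hs : 0 ≤ s) (hp : 0 ≤ p) :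
    0 ≤ (r ^ 2 - s ^ 2) * (r ^ p - s ^ p) := by
  rcases le_total r s with h | h
  · exact mul_nonneg_of_nonpos_of_nonpos
      (sub_nonpos.2 (pow_le_pow_left₀ hr h 2)) (sub_nonpos.2 (rpow_le_rpow hr h hp))
  · exact mul_nonneg (sub_nonneg.2 (pow_le_pow_left₀ hs h 2)) (sub_nonneg.2 (rpow_le_rpow hs h hp))

lemma rpow_sub_rpow_eq_exp_mul_sinh {r s : ℝ} (hr : 0 < r) (hs : 0 < s) (k : ℝ) :
    r ^ k - s ^ k
      = 2 * exp (k * ((log r + log s) / 2)) * sinh (k * ((log r - log s) / 2)) := by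
  have hr' : log r * k = k * ((log r + log s) / 2) + k * ((log r - log s) / 2) := by ring
  have hs' : log s * k = k * ((log r + log s) / 2) + -(k * ((log r - log s) / 2)) := by ring
  rw [rpow_def_of_pos hr, rpow_def_of_pos hs, hr', hs', exp_add, exp_add, sinh_eq]
  ring

lemma rpow_sub_rpow_sq_mul_le {m r s : ℝ} (hm : 0 ≤ m) (hr : 0 ≤ r) (hs : 0 ≤ s) :
    4 * (m + 1) * ((r * s) ^ 2 * (r ^ m - s ^ m) ^ 2)
      ≤ m ^ 2 * ((r ^ 2 - s ^ 2) * (r ^ (2 * m + 2) - s ^ (2 * m + 2))) := by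
  rcases hr.eq_or_lt with rfl | hr
  · simpa using
      mul_nonneg (sq_nonneg m) (sq_sub_sq_mul_rpow_sub_rpow_nonneg le_rfl hs (by linarith))
  rcases hs.eq_or_lt with rfl | hs
  · simpa using
      mul_nonneg (sq_nonneg m) (sq_sub_sq_mul_rpow_sub_rpow_nonneg hr.le le_rfl (by linarith))
  set g := (log r + log s) / 2
  set x := (log r - log s) / 2
  have hdiff (k : ℝ) : r ^ k - s ^ k = 2 * exp (k * g) * sinh (k * x) :=
    rpow_sub_rpow_eq_exp_mul_sinh hr hs k
  have hrs : r * s = exp (2 * g) := by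
    rw [show 2 * g = log r + log s by ring, exp_add, exp_log hr, exp_log hs]
  have hexp : exp (2 * g) ^ 2 * exp (m * g) ^ 2 = exp (2 * g) * exp ((2 * m + 2) * g) := by
    simp only [sq, ← exp_add]; ring_nf
  rw [← rpow_two r, ← rpow_two s, hrs, hdiff, hdiff, hdiff]
  calc 4 * (m + 1) * (exp (2 * g) ^ 2 * (2 * exp (m * g) * sinh (m * x)) ^ 2)
      = 4 * (exp (2 * g) ^ 2 * exp (m * g) ^ 2) * (4 * (m + 1) * sinh (m * x) ^ 2) := by ring
    _ ≤ 4 * (exp (2 * g) * exp ((2 * m + 2) * g))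
          * (m ^ 2 * (sinh (2 * x) * sinh ((2 * m + 2) * x))) := by
      rw [hexp]
      exact mul_le_mul_of_nonneg_left (sinh_mul_sq_le_sinh_mul_sinh hm x) (by positivity)
    _ = _ := by ring

lemma rpow_add_two {r m : ℝ} (hr : 0 ≤ r) (hm : 0 ≤ m) : r ^ (m + 2) = r ^ m * r ^ 2 := by
  exact_mod_cast rpow_add_natCast' hr (n := 2) (by positivity)

lemma abs_rpow_sub_rpow_mul_add_le {m r s u v : ℝ} (hm : 0 ≤ m) (hr : 0 ≤ r) (hs : 0 ≤ s)
    (huv : u ^ 2 + v ^ 2 ≤ (r * s) ^ 2) :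
    √(m + 1) * |(r ^ m - s ^ m) * v| + m / 2 * (r ^ m + s ^ m) * u
      ≤ m / 2 * (r ^ m * r ^ 2 + s ^ m * s ^ 2) := by
  have hpow {t : ℝ} (ht : 0 ≤ t) : t ^ (2 * m + 2) = t ^ m * (t ^ m * t ^ 2) := by
    rw [show 2 * m + 2 = m + (m + 2) by ring, rpow_add_of_nonneg ht hm (by linarith),
      rpow_add_two ht hm]
  have hL := rpow_sub_rpow_sq_mul_le hm hr hs
  rw [hpow hr, hpow hs] at hL
  set P := r ^ m
  set Q := s ^ m
  have hP : 0 ≤ P := rpow_nonneg hr m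
  have hQ : 0 ≤ Q := rpow_nonneg hs m
  set A := √(m + 1) * |P - Q|
  set B := m / 2 * (P + Q)
  set C := m / 2 * (P * r ^ 2 + Q * s ^ 2)
  have hA : A ^ 2 = (m + 1) * (P - Q) ^ 2 := by
    rw [mul_pow, sq_abs, sq_sqrt (by linarith)]
  have hABC : (r * s) ^ 2 * (A ^ 2 + B ^ 2) ≤ C ^ 2 := by
    rw [hA]; linear_combination (1 / 4) * hL
  have hCS : (A * |v| + B * u) ^ 2 ≤ C ^ 2 := by
    nlinarith [sq_nonneg (A * u - B * |v|), sq_abs v,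
      mul_le_mul_of_nonneg_left huv (by positivity : 0 ≤ A ^ 2 + B ^ 2)]
  rw [abs_mul, ← mul_assoc]
  exact (abs_le_of_sq_le_sq' hCS (by positivity)).2

lemma re_mul_conj_sub (P Q : ℝ) (a b : ℂ) :
    (((P : ℂ) * a - (Q : ℂ) * b) * conj (a - b)).re
      = P * ‖a‖ ^ 2 + Q * ‖b‖ ^ 2 - (P + Q) * (a * conj b).re := by
  simp only [Complex.sq_norm, Complex.normSq_apply, Complex.mul_re, Complex.mul_im,
    Complex.sub_re, Complex.sub_im, Complex.ofReal_re, Complex.ofReal_im, Complex.conj_re,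
    Complex.conj_im]
  ring

lemma im_mul_conj_sub (P Q : ℝ) (a b : ℂ) :
    (((P : ℂ) * a - (Q : ℂ) * b) * conj (a - b)).im = (Q - P) * (a * conj b).im := by
  simp only [Complex.mul_re, Complex.mul_im, Complex.sub_re, Complex.sub_im, Complex.ofReal_re,
    Complex.ofReal_im, Complex.conj_re, Complex.conj_im]
  ring

lemma norm_sub_sq_eq (a b : ℂ) : ‖a - b‖ ^ 2 = ‖a‖ ^ 2 + ‖b‖ ^ 2 - 2 * (a * conj b).re := by
  simp only [Complex.sq_norm, Complex.normSq_sub]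

lemma re_sq_add_im_sq_mul_conj (a b : ℂ) :
    (a * conj b).re ^ 2 + (a * conj b).im ^ 2 = (‖a‖ * ‖b‖) ^ 2 := by
  rw [← Complex.norm_conj b, ← norm_mul, Complex.sq_norm, Complex.normSq_apply]
  ring

lemma sqrt_add_one_mul_abs_im_le {m : ℝ} (hm : 0 ≤ m) (a b : ℂ) :
    √(m + 1) * |((((‖a‖ ^ m : ℝ) : ℂ) * a - ((‖b‖ ^ m : ℝ) : ℂ) * b) * conj (a - b)).im|
      ≤ m / 2 * ((((‖a‖ ^ m : ℝ) : ℂ) * a - ((‖b‖ ^ m : ℝ) : ℂ) * b) * conj (a - b)).re := by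
  have h := abs_rpow_sub_rpow_mul_add_le hm (norm_nonneg a) (norm_nonneg b)
    (re_sq_add_im_sq_mul_conj a b).le
  rw [re_mul_conj_sub, im_mul_conj_sub, abs_mul, abs_sub_comm, ← abs_mul]
  linarith

lemma two_rpow_neg_mul_norm_sub_rpow_le {m : ℝ} (hm : 1 ≤ m) (a b : ℂ) :
    (2 : ℝ) ^ (-m) * ‖a - b‖ ^ (m + 2)
      ≤ ((((‖a‖ ^ m : ℝ) : ℂ) * a - ((‖b‖ ^ m : ℝ) : ℂ) * b) * conj (a - b)).re := by
  have hr := norm_nonneg a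
  have hs := norm_nonneg b
  have hD := norm_nonneg (a - b)
  have hmono := sq_sub_sq_mul_rpow_sub_rpow_nonneg hr hs (by linarith : 0 ≤ m)
  have hmean : (1 / 2) * ((‖a‖ ^ m + ‖b‖ ^ m) * ‖a - b‖ ^ 2)
      ≤ ((((‖a‖ ^ m : ℝ) : ℂ) * a - ((‖b‖ ^ m : ℝ) : ℂ) * b) * conj (a - b)).re := by
    rw [re_mul_conj_sub, norm_sub_sq_eq]
    linear_combination (1 / 2) * hmono
  have hconv : (‖a - b‖ / 2) ^ m ≤ (1 / 2) * (‖a‖ ^ m + ‖b‖ ^ m) := calc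
    (‖a - b‖ / 2) ^ m ≤ ((1 / 2 : ℝ) • ‖a‖ + (1 / 2 : ℝ) • ‖b‖) ^ m := by
      refine rpow_le_rpow (by positivity) ?_ (by linarith)
      simp only [smul_eq_mul]
      linarith [norm_sub_le a b]
    _ ≤ (1 / 2 : ℝ) • ‖a‖ ^ m + (1 / 2 : ℝ) • ‖b‖ ^ m :=
      (convexOn_rpow hm).2 hr hs (by norm_num) (by norm_num) (by norm_num)
    _ = _ := by simp only [smul_eq_mul]; ring
  calc (2 : ℝ) ^ (-m) * ‖a - b‖ ^ (m + 2) = (‖a - b‖ / 2) ^ m * ‖a - b‖ ^ 2 := by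
        rw [div_rpow hD zero_le_two, rpow_neg zero_le_two, rpow_add_two hD (by linarith)]
        ring
    _ ≤ (1 / 2) * (‖a‖ ^ m + ‖b‖ ^ m) * ‖a - b‖ ^ 2 := by gcongr
    _ ≤ _ := by linarith

/-- For `σ > 2` and `σ|β| < √(2σ+1)`, for all complex `a, b`:
`Re[(1 − iβ)(|a|^{2σ}a − |b|^{2σ}b) · conj(a − b)]
  ≥ (1 − σ|β|/√(2σ+1)) · 2^{−2σ} · |a − b|^{2σ+2}`. -/
theorem stmt5 (σ β : ℝ) (hσ : 2 < σ) (hβ : σ * |β| < Real.sqrt (2 * σ + 1)) (a b : ℂ) :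
    (1 - σ * |β| / Real.sqrt (2 * σ + 1)) * (2 : ℝ) ^ (-(2 * σ)) *
        ‖a - b‖ ^ (2 * σ + 2)
      ≤ ((1 - Complex.I * (β : ℂ)) *
          (((‖a‖ ^ (2 * σ) : ℝ) : ℂ) * a - ((‖b‖ ^ (2 * σ) : ℝ) : ℂ) * b) *
          (starRingEnd ℂ) (a - b)).re := by
  have hre (w : ℂ) : ((1 - Complex.I * (β : ℂ)) * w).re = w.re + β * w.im := by
    simp [Complex.mul_re]
  have hlower := two_rpow_neg_mul_norm_sub_rpow_le (by linarith : (1 : ℝ) ≤ 2 * σ) a b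
  have him := sqrt_add_one_mul_abs_im_le (by linarith : (0 : ℝ) ≤ 2 * σ) a b
  rw [mul_div_cancel_left₀ σ two_ne_zero] at him
  rw [mul_assoc (1 - Complex.I * (β : ℂ)), hre, mul_assoc]
  set z := (((‖a‖ ^ (2 * σ) : ℝ) : ℂ) * a - ((‖b‖ ^ (2 * σ) : ℝ) : ℂ) * b) * conj (a - b)
  set k := σ * |β| / √(2 * σ + 1)
  have hS : 0 < √(2 * σ + 1) := sqrt_pos.2 (by linarith)
  have hk : k < 1 := (div_lt_one hS).2 hβ
  have him' : |z.im| ≤ σ * z.re / √(2 * σ + 1) := by rw [le_div_iff₀ hS]; linarith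
  have hβim : -(k * z.re) ≤ β * z.im := calc
    -(k * z.re) = -(|β| * (σ * z.re / √(2 * σ + 1))) := by ring
    _ ≤ -(|β| * |z.im|) := neg_le_neg (mul_le_mul_of_nonneg_left him' (abs_nonneg β))
    _ ≤ β * z.im := by rw [← abs_mul]; exact neg_abs_le _
  linarith [mul_le_mul_of_nonneg_left hlower (by linarith : 0 ≤ 1 - k)]
end

section
/- Let σ > 0 be a real number. There exists a constant C > 0, depending only on σ, such that for every continuously differentiable compactly supported function u : ℝ² → ℂ one has ‖u‖_{L^{4σ+2}(ℝ²)} ≤ C · ‖∇u‖_{L²(ℝ²)}^{σ/(2σ+1)} · ‖u‖_{L^{2σ+2}(ℝ²)}^{(σ+1)/(2σ+1)}. -/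
/-!
Apply the Gagliardo–Nirenberg–Sobolev inequality `‖v‖_{L^r} ≤ C ‖∇v‖_{L^p}`, `1/r = 1/p - 1/2`,
to `v = |u|^s`. Since `|∇v| ≤ s |u|^(s-1) |∇u|`, Hölder's inequality with `1/p = 1/r + 1/2` gives
`‖u‖_{L^(rs)}^s ≤ C s ‖u‖_{L^(r(s-1))}^(s-1) ‖∇u‖_{L²}` for every `r ≥ 2` (i.e. `p ≥ 1`).
For `σ ≥ 1` the choice `r = 2σ`, `s = (2σ+1)/σ` gives the claim after taking `s`-th roots.
For `σ < 1` it would need `p < 1`; instead `r = 2`, `s = σ + 2` bounds the `L^(2σ+4)` norm, and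
`L^(4σ+2)` is interpolated between `L^(2σ+2)` and `L^(2σ+4)`, as `4σ+2 = (1-σ)(2σ+2) + σ(2σ+4)`.
-/

open MeasureTheory Module ENNReal
open scoped NNReal

theorem ENNReal.le_coe_rpow_inv_mul_rpow_mul_rpow {A G B : ℝ≥0∞} {K : ℝ≥0} {a β γ : ℝ} (ha : 0 < a)
    (h : A ^ a ≤ K * G ^ (a * β) * B ^ (a * γ)) :
    A ≤ ↑(K ^ a⁻¹) * G ^ β * B ^ γ := by
  have ha' : 0 ≤ a⁻¹ := inv_nonneg.2 ha.le
  rw [← ENNReal.le_rpow_inv_iff ha] at h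
  refine h.trans_eq ?_
  rw [ENNReal.mul_rpow_of_nonneg _ _ ha', ENNReal.mul_rpow_of_nonneg _ _ ha', ← ENNReal.rpow_mul,
    ← ENNReal.rpow_mul, mul_right_comm a β, mul_right_comm a γ, mul_inv_cancel₀ ha.ne', one_mul,
    one_mul, ENNReal.coe_rpow_of_nonneg _ ha']

theorem eLpNorm_rpow_le_eLpNorm_rpow_mul_eLpNorm_rpow {α G : Type*} [MeasurableSpace α]
    {μ : Measure α} [NormedAddCommGroup G] {f : α → G} (hf : AEStronglyMeasurable f μ)
    {p q θ : ℝ} (hp : 0 < p) (hq : 0 < q) (hθ₀ : 0 ≤ θ) (hθ₁ : θ ≤ 1) :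
    eLpNorm f (ENNReal.ofReal ((1 - θ) * p + θ * q)) μ ^ ((1 - θ) * p + θ * q)
      ≤ eLpNorm f (ENNReal.ofReal p) μ ^ ((1 - θ) * p)
        * eLpNorm f (ENNReal.ofReal q) μ ^ (θ * q) := by
  have moment : ∀ r : ℝ, 0 < r → eLpNorm f (ENNReal.ofReal r) μ ^ r = ∫⁻ x, ‖f x‖ₑ ^ r ∂μ :=
    fun r hr ↦ by
      have := eLpNorm_nnreal_pow_eq_lintegral (μ := μ) (f := f) (p := r.toNNReal)
        (by simpa using hr)
      rwa [Real.coe_toNNReal _ hr.le] at this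
  have h1θ : 0 ≤ 1 - θ := sub_nonneg.2 hθ₁
  have hr : 0 < (1 - θ) * p + θ * q := by
    rcases hθ₀.eq_or_lt with rfl | hθ
    · simpa using hp
    · exact add_pos_of_nonneg_of_pos (by positivity) (by positivity)
  rw [moment _ hr, mul_comm (1 - θ), mul_comm θ, ENNReal.rpow_mul, ENNReal.rpow_mul,
    moment p hp, moment q hq]
  calc ∫⁻ x, ‖f x‖ₑ ^ (p * (1 - θ) + q * θ) ∂μ
      = ∫⁻ x, (‖f x‖ₑ ^ p) ^ (1 - θ) * (‖f x‖ₑ ^ q) ^ θ ∂μ := by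
        refine lintegral_congr fun x ↦ ?_
        rw [← ENNReal.rpow_mul, ← ENNReal.rpow_mul,
          ENNReal.rpow_add_of_nonneg _ _ (by positivity) (by positivity)]
    _ ≤ _ := ENNReal.lintegral_mul_norm_pow_le (hf.enorm.pow_const p) (hf.enorm.pow_const q)
        h1θ hθ₀ (sub_add_cancel 1 θ)

theorem lpNorm_ofReal_eq_integral_norm_rpow {α G : Type*} [MeasurableSpace α] {μ : Measure α}
    [NormedAddCommGroup G] {f : α → G} (hf : AEStronglyMeasurable f μ) {r : ℝ} (hr : 0 < r) :
    lpNorm f (ENNReal.ofReal r) μ = (∫ x, ‖f x‖ ^ r ∂μ) ^ (1 / r) := by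
  rw [lpNorm_eq_integral_norm_rpow_toReal (by simpa using hr) ENNReal.ofReal_ne_top hf,
    ENNReal.toReal_ofReal hr.le, one_div]

section Sobolev

variable {E F : Type*} [NormedAddCommGroup E] [NormedSpace ℝ E] [FiniteDimensional ℝ E]
  [MeasurableSpace E] [BorelSpace E] {μ : Measure E} [μ.IsAddHaarMeasure]
  [NormedAddCommGroup F] [InnerProductSpace ℝ F]

theorem eLpNorm_rpow_le_eLpNorm_rpow_mul_eLpNorm_fderiv {u : E → F} (hu : ContDiff ℝ 1 u)
    (h2u : HasCompactSupport u) {s : ℝ} (hs : 1 < s) {p p' : ℝ≥0} (hp : 1 ≤ p)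
    (hn : 0 < finrank ℝ E) (hp' : (p' : ℝ)⁻¹ = p⁻¹ - (finrank ℝ E : ℝ)⁻¹)
    {q t : ℝ≥0∞} [HolderTriple t q p] :
    eLpNorm u (p' * ENNReal.ofReal s) μ ^ s
      ≤ SNormLESNormFDerivOfEqConst ℝ μ p * ENNReal.ofReal s
        * eLpNorm u (t * ENNReal.ofReal (s - 1)) μ ^ (s - 1) * eLpNorm (fderiv ℝ u) q μ := by
  have hs₀ : 0 < s := zero_lt_one.trans hs
  have hs₁ : 0 < s - 1 := sub_pos.2 hs
  let v : E → ℝ := fun x ↦ ‖u x‖ ^ s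
  have hv : ContDiff ℝ 1 v := hu.norm_rpow hs
  have h2v : HasCompactSupport v := h2u.norm.rpow_const hs₀.ne'
  have hDv : ∀ x, ‖fderiv ℝ v x‖ₑ ≤ s.toNNReal * ‖(‖u x‖ ^ (s - 1)) • fderiv ℝ u x‖ₑ := by
    intro x
    have := enorm_fderiv_norm_rpow_le (hu.differentiable one_ne_zero) (x := x)
      (p := s.toNNReal) (by simpa using hs)
    rw [Real.coe_toNNReal _ hs₀.le] at this
    refine this.trans_eq ?_
    rw [enorm_smul, mul_assoc, Real.enorm_rpow_of_nonneg (norm_nonneg _) hs₁.le, enorm_norm]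
  calc eLpNorm u (p' * ENNReal.ofReal s) μ ^ s = eLpNorm v p' μ :=
        (eLpNorm_norm_rpow u hs₀).symm
    _ ≤ SNormLESNormFDerivOfEqConst ℝ μ p * eLpNorm (fderiv ℝ v) p μ :=
        eLpNorm_le_eLpNorm_fderiv_of_eq μ hv h2v hp hn hp'
    _ ≤ SNormLESNormFDerivOfEqConst ℝ μ p
          * (ENNReal.ofReal s * eLpNorm (fun x ↦ (‖u x‖ ^ (s - 1)) • fderiv ℝ u x) p μ) := by
        gcongr
        exact eLpNorm_le_nnreal_smul_eLpNorm_of_ae_le_mul' (.of_forall hDv) _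
    _ ≤ SNormLESNormFDerivOfEqConst ℝ μ p * (ENNReal.ofReal s
          * (eLpNorm (fun x ↦ ‖u x‖ ^ (s - 1)) t μ * eLpNorm (fderiv ℝ u) q μ)) := by
        gcongr
        exact (eLpNorm_smul_le_mul_eLpNorm (p := t) (q := q) (r := p)
          (hu.continuous_fderiv one_ne_zero).aestronglyMeasurable
          (hu.continuous.norm.rpow_const fun _ ↦ Or.inr hs₁.le).aestronglyMeasurable :)
    _ = _ := by rw [eLpNorm_norm_rpow u hs₁]; ring

theorem exists_eLpNorm_rpow_le_of_finrank_eq_two (hE : finrank ℝ E = 2) {r s : ℝ} (hr : 2 ≤ r)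
    (hs : 1 < s) :
    ∃ K : ℝ≥0, ∀ u : E → F, ContDiff ℝ 1 u → HasCompactSupport u →
      eLpNorm u (ENNReal.ofReal (r * s)) μ ^ s
        ≤ K * eLpNorm u (ENNReal.ofReal (r * (s - 1))) μ ^ (s - 1)
          * eLpNorm (fderiv ℝ u) 2 μ := by
  have hr₀ : 0 < r := by linarith
  set p : ℝ≥0 := (2 * r / (r + 2)).toNNReal
  have hp : (p : ℝ) = 2 * r / (r + 2) := Real.coe_toNNReal _ (by positivity)
  have hp₁ : 1 ≤ p := by
    rw [← NNReal.coe_le_coe, hp, NNReal.coe_one, le_div_iff₀ (by positivity)]; linarith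
  have hp' : (r.toNNReal : ℝ)⁻¹ = (p : ℝ)⁻¹ - (finrank ℝ E : ℝ)⁻¹ := by
    rw [Real.coe_toNNReal _ hr₀.le, hp, hE]; field_simp; ring
  have : HolderTriple (ENNReal.ofReal r) 2 p := ⟨by
    rw [show (p : ℝ≥0∞) = ENNReal.ofReal (2 * r / (r + 2)) from rfl,
      ← ENNReal.ofReal_ofNat 2, ← ENNReal.ofReal_inv_of_pos hr₀,
      ← ENNReal.ofReal_inv_of_pos two_pos, ← ENNReal.ofReal_inv_of_pos (by positivity),
      ← ENNReal.ofReal_add (by positivity) (by positivity)]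
    congr 1; field_simp; ring⟩
  refine ⟨SNormLESNormFDerivOfEqConst ℝ μ p * s.toNNReal, fun u hu h2u ↦ ?_⟩
  have h := eLpNorm_rpow_le_eLpNorm_rpow_mul_eLpNorm_fderiv (μ := μ) hu h2u hs hp₁ (by omega) hp'
    (t := ENNReal.ofReal r) (q := 2)
  rw [ENNReal.coe_mul, ENNReal.ofReal_mul hr₀.le, ENNReal.ofReal_mul hr₀.le]
  exact h

theorem exists_eLpNorm_le_of_finrank_eq_two_of_one_le (hE : finrank ℝ E = 2) {σ : ℝ}
    (hσ : 1 ≤ σ) :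
    ∃ C : ℝ≥0, ∀ u : E → F, ContDiff ℝ 1 u → HasCompactSupport u →
      eLpNorm u (ENNReal.ofReal (4 * σ + 2)) μ
        ≤ C * eLpNorm (fderiv ℝ u) 2 μ ^ (σ / (2 * σ + 1))
          * eLpNorm u (ENNReal.ofReal (2 * σ + 2)) μ ^ ((σ + 1) / (2 * σ + 1)) := by
  have hσ₀ : 0 < σ := by linarith
  have hs : 1 < (2 * σ + 1) / σ := by rw [lt_div_iff₀ hσ₀]; linarith
  obtain ⟨K, hK⟩ := exists_eLpNorm_rpow_le_of_finrank_eq_two (μ := μ) (F := F) hE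
    (by linarith : 2 ≤ 2 * σ) hs
  refine ⟨K ^ ((2 * σ + 1) / σ)⁻¹, fun u hu h2u ↦
    le_coe_rpow_inv_mul_rpow_mul_rpow (by positivity) ?_⟩
  have h := hK u hu h2u
  rw [show 2 * σ * ((2 * σ + 1) / σ) = 4 * σ + 2 by field_simp; ring,
    show 2 * σ * ((2 * σ + 1) / σ - 1) = 2 * σ + 2 by field_simp; ring] at h
  rw [show (2 * σ + 1) / σ * (σ / (2 * σ + 1)) = 1 by field_simp, ENNReal.rpow_one,
    show (2 * σ + 1) / σ * ((σ + 1) / (2 * σ + 1)) = (2 * σ + 1) / σ - 1 by field_simp; ring]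
  exact h.trans_eq (by ring)

theorem exists_eLpNorm_le_of_finrank_eq_two_of_lt_one (hE : finrank ℝ E = 2) {σ : ℝ}
    (hσ₀ : 0 < σ) (hσ : σ < 1) :
    ∃ C : ℝ≥0, ∀ u : E → F, ContDiff ℝ 1 u → HasCompactSupport u →
      eLpNorm u (ENNReal.ofReal (4 * σ + 2)) μ
        ≤ C * eLpNorm (fderiv ℝ u) 2 μ ^ (σ / (2 * σ + 1))
          * eLpNorm u (ENNReal.ofReal (2 * σ + 2)) μ ^ ((σ + 1) / (2 * σ + 1)) := by
  obtain ⟨K, hK⟩ := exists_eLpNorm_rpow_le_of_finrank_eq_two (μ := μ) (F := F) hE le_rfl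
    (by linarith : 1 < σ + 2)
  refine ⟨(K ^ (2 * σ)) ^ (4 * σ + 2)⁻¹, fun u hu h2u ↦
    le_coe_rpow_inv_mul_rpow_mul_rpow (by positivity) ?_⟩
  set A := eLpNorm u (ENNReal.ofReal (4 * σ + 2)) μ
  set B := eLpNorm u (ENNReal.ofReal (2 * σ + 2)) μ
  set Q := eLpNorm u (ENNReal.ofReal (2 * σ + 4)) μ
  set G := eLpNorm (fderiv ℝ u) 2 μ
  have hQ : Q ^ (σ + 2) ≤ K * B ^ (σ + 1) * G := by
    have h := hK u hu h2u
    rwa [show 2 * (σ + 2) = 2 * σ + 4 by ring, show 2 * (σ + 2 - 1) = 2 * σ + 2 by ring,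
      show σ + 2 - 1 = σ + 1 by ring] at h
  have hA : A ^ (4 * σ + 2) ≤ B ^ ((1 - σ) * (2 * σ + 2)) * Q ^ (σ * (2 * σ + 4)) := by
    have h := eLpNorm_rpow_le_eLpNorm_rpow_mul_eLpNorm_rpow
      hu.continuous.aestronglyMeasurable (μ := μ) (p := 2 * σ + 2) (q := 2 * σ + 4)
      (by positivity) (by positivity) hσ₀.le hσ.le
    rwa [show (1 - σ) * (2 * σ + 2) + σ * (2 * σ + 4) = 4 * σ + 2 by ring] at h
  calc A ^ (4 * σ + 2) ≤ B ^ ((1 - σ) * (2 * σ + 2)) * (Q ^ (σ + 2)) ^ (2 * σ) := by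
        rwa [← ENNReal.rpow_mul, show (σ + 2) * (2 * σ) = σ * (2 * σ + 4) by ring]
    _ ≤ B ^ ((1 - σ) * (2 * σ + 2)) * (K * B ^ (σ + 1) * G) ^ (2 * σ) := by gcongr
    _ = ↑(K ^ (2 * σ)) * G ^ ((4 * σ + 2) * (σ / (2 * σ + 1)))
          * B ^ ((4 * σ + 2) * ((σ + 1) / (2 * σ + 1))) := by
        rw [ENNReal.mul_rpow_of_nonneg _ _ (by positivity),
          ENNReal.mul_rpow_of_nonneg _ _ (by positivity), ← ENNReal.rpow_mul,
          ENNReal.coe_rpow_of_nonneg _ (by positivity),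
          show (4 * σ + 2) * (σ / (2 * σ + 1)) = 2 * σ by field_simp; ring,
          show (4 * σ + 2) * ((σ + 1) / (2 * σ + 1)) = (1 - σ) * (2 * σ + 2) + (σ + 1) * (2 * σ) by
            field_simp; ring,
          ENNReal.rpow_add_of_nonneg _ _ (by nlinarith) (by positivity)]
        ring

theorem exists_eLpNorm_le_mul_eLpNorm_fderiv_rpow_mul_eLpNorm_rpow (hE : finrank ℝ E = 2)
    {σ : ℝ} (hσ : 0 < σ) :
    ∃ C : ℝ≥0, ∀ u : E → F, ContDiff ℝ 1 u → HasCompactSupport u →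
      eLpNorm u (ENNReal.ofReal (4 * σ + 2)) μ
        ≤ C * eLpNorm (fderiv ℝ u) 2 μ ^ (σ / (2 * σ + 1))
          * eLpNorm u (ENNReal.ofReal (2 * σ + 2)) μ ^ ((σ + 1) / (2 * σ + 1)) := by
  rcases lt_or_ge σ 1 with h | h
  · exact exists_eLpNorm_le_of_finrank_eq_two_of_lt_one hE hσ h
  · exact exists_eLpNorm_le_of_finrank_eq_two_of_one_le hE h

theorem exists_lpNorm_le_mul_lpNorm_fderiv_rpow_mul_lpNorm_rpow (hE : finrank ℝ E = 2)
    {σ : ℝ} (hσ : 0 < σ) :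
    ∃ C : ℝ≥0, ∀ u : E → F, ContDiff ℝ 1 u → HasCompactSupport u →
      lpNorm u (ENNReal.ofReal (4 * σ + 2)) μ
        ≤ C * lpNorm (fderiv ℝ u) 2 μ ^ (σ / (2 * σ + 1))
          * lpNorm u (ENNReal.ofReal (2 * σ + 2)) μ ^ ((σ + 1) / (2 * σ + 1)) := by
  obtain ⟨C, hC⟩ := exists_eLpNorm_le_mul_eLpNorm_fderiv_rpow_mul_eLpNorm_rpow (μ := μ) (F := F)
    hE hσ
  refine ⟨C, fun u hu h2u ↦ ?_⟩
  have hu' : AEStronglyMeasurable u μ := hu.continuous.aestronglyMeasurable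
  have hDu : MemLp (fderiv ℝ u) 2 μ :=
    (hu.continuous_fderiv one_ne_zero).memLp_of_hasCompactSupport (h2u.fderiv (𝕜 := ℝ))
  have hB : eLpNorm u (ENNReal.ofReal (2 * σ + 2)) μ ≠ ⊤ :=
    (hu.continuous.memLp_of_hasCompactSupport h2u).eLpNorm_ne_top
  rw [← toReal_eLpNorm hu', ← toReal_eLpNorm hu', ← toReal_eLpNorm hDu.1,
    ENNReal.toReal_rpow, ENNReal.toReal_rpow, ← ENNReal.coe_toReal, ← ENNReal.toReal_mul,
    ← ENNReal.toReal_mul]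
  refine ENNReal.toReal_mono ?_ (hC u hu h2u)
  have hG : eLpNorm (fderiv ℝ u) 2 μ ≠ ⊤ := hDu.eLpNorm_ne_top
  finiteness

end Sobolev

-- `ℝ × ℝ` carries the sup norm, whence the factor `√2`.
theorem ContinuousLinearMap.norm_le_sqrt_two_mul_norm_sq_add_norm_sq {F : Type*}
    [NormedAddCommGroup F] [NormedSpace ℝ F] (L : ℝ × ℝ →L[ℝ] F) :
    ‖L‖ ≤ √(2 * (‖L (1, 0)‖ ^ 2 + ‖L (0, 1)‖ ^ 2)) := by
  have hL : ‖L‖ ≤ ‖L (1, 0)‖ + ‖L (0, 1)‖ := by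
    refine L.opNorm_le_bound (by positivity) fun y ↦ ?_
    have hy : y = y.1 • ((1 : ℝ), (0 : ℝ)) + y.2 • ((0 : ℝ), (1 : ℝ)) := by ext <;> simp
    calc ‖L y‖ = ‖y.1 • L (1, 0) + y.2 • L (0, 1)‖ := by
          conv_lhs => rw [hy]
          rw [map_add, map_smul, map_smul]
      _ ≤ ‖y.1‖ * ‖L (1, 0)‖ + ‖y.2‖ * ‖L (0, 1)‖ := (norm_add_le _ _).trans_eq
          (by rw [norm_smul, norm_smul])
      _ ≤ ‖y‖ * ‖L (1, 0)‖ + ‖y‖ * ‖L (0, 1)‖ := by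
          gcongr
          exacts [_root_.norm_fst_le y, _root_.norm_snd_le y]
      _ = _ := by ring
  refine hL.trans ((Real.le_sqrt (by positivity) (by positivity)).2 ?_)
  nlinarith [sq_nonneg (‖L (1, 0)‖ - ‖L (0, 1)‖)]

theorem lpNorm_two_fderiv_le_sqrt_two_mul {F : Type*} [NormedAddCommGroup F] [NormedSpace ℝ F]
    {u : ℝ × ℝ → F} (hu : ContDiff ℝ 1 u) (h2u : HasCompactSupport u) :
    lpNorm (fderiv ℝ u) 2 volume
      ≤ √2 * (∫ x, ‖fderiv ℝ u x (1, 0)‖ ^ 2 + ‖fderiv ℝ u x (0, 1)‖ ^ 2) ^ (1 / 2 : ℝ) := by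
  set g : ℝ × ℝ → ℝ := fun x ↦ ‖fderiv ℝ u x (1, 0)‖ ^ 2 + ‖fderiv ℝ u x (0, 1)‖ ^ 2
  have hDu := hu.continuous_fderiv one_ne_zero
  have h2g : HasCompactSupport g :=
    h2u.fderiv (𝕜 := ℝ) |>.comp_left (g := fun L : ℝ × ℝ →L[ℝ] F ↦ ‖L (1, 0)‖ ^ 2 + ‖L (0, 1)‖ ^ 2)
      (by simp)
  have hg' : Continuous fun x ↦ √(2 * g x) := by fun_prop
  have h2g' : HasCompactSupport fun x ↦ √(2 * g x) :=
    h2g.comp_left (g := fun y ↦ √(2 * y)) (by simp)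
  calc lpNorm (fderiv ℝ u) 2 volume ≤ lpNorm (fun x ↦ √(2 * g x)) 2 volume :=
        lpNorm_mono_real (hg'.memLp_of_hasCompactSupport h2g') fun x ↦
          (fderiv ℝ u x).norm_le_sqrt_two_mul_norm_sq_add_norm_sq
    _ = √2 * (∫ x, g x) ^ (1 / 2 : ℝ) := by
        have hg₀ : ∀ x, 0 ≤ 2 * g x := fun x ↦ by positivity
        rw [lpNorm_eq_integral_norm_rpow_toReal two_ne_zero ENNReal.ofNat_ne_top
            hg'.aestronglyMeasurable]
        simp only [ENNReal.toReal_ofNat, Real.rpow_two, Real.norm_of_nonneg (Real.sqrt_nonneg _),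
          Real.sq_sqrt (hg₀ _)]
        rw [integral_const_mul, Real.mul_rpow zero_le_two (integral_nonneg fun x ↦ by positivity),
          Real.sqrt_eq_rpow, one_div]

/-- Gagliardo–Nirenberg-type inequality on `ℝ²`: there is `C > 0` depending only on `σ > 0`
such that for every `C¹` compactly supported `u : ℝ² → ℂ`,
`‖u‖_{L^{4σ+2}} ≤ C ‖∇u‖_{L²}^{σ/(2σ+1)} ‖u‖_{L^{2σ+2}}^{(σ+1)/(2σ+1)}`.
Here `|∇u(x)|² = |∂₁u(x)|² + |∂₂u(x)|²`. -/
theorem stmt6 (σ : ℝ) (hσ : 0 < σ) :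
    ∃ C : ℝ, 0 < C ∧ ∀ u : ℝ × ℝ → ℂ, ContDiff ℝ 1 u → HasCompactSupport u →
      (∫ x : ℝ × ℝ, ‖u x‖ ^ (4 * σ + 2)) ^ (1 / (4 * σ + 2))
        ≤ C * (∫ x : ℝ × ℝ, (‖fderiv ℝ u x (1, 0)‖ ^ 2
                + ‖fderiv ℝ u x (0, 1)‖ ^ 2)) ^ (σ / (2 * (2 * σ + 1)))
            * (∫ x : ℝ × ℝ, ‖u x‖ ^ (2 * σ + 2))
                ^ ((σ + 1) / ((2 * σ + 2) * (2 * σ + 1))) := by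
  obtain ⟨C, hC⟩ := exists_lpNorm_le_mul_lpNorm_fderiv_rpow_mul_lpNorm_rpow
    (E := ℝ × ℝ) (F := ℂ) (μ := volume) (by simp) hσ
  refine ⟨√2 * (C + 1), by positivity, fun u hu h2u ↦ ?_⟩
  have hu' : AEStronglyMeasurable u volume := hu.continuous.aestronglyMeasurable
  set I := ∫ x : ℝ × ℝ, (‖fderiv ℝ u x (1, 0)‖ ^ 2 + ‖fderiv ℝ u x (0, 1)‖ ^ 2)
  set J := ∫ x : ℝ × ℝ, ‖u x‖ ^ (2 * σ + 2)
  have hI : 0 ≤ I := integral_nonneg fun x ↦ by positivity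
  have hJ : 0 ≤ J := integral_nonneg fun x ↦ by positivity
  calc (∫ x : ℝ × ℝ, ‖u x‖ ^ (4 * σ + 2)) ^ (1 / (4 * σ + 2))
      = lpNorm u (ENNReal.ofReal (4 * σ + 2)) volume :=
        (lpNorm_ofReal_eq_integral_norm_rpow hu' (by positivity)).symm
    _ ≤ C * lpNorm (fderiv ℝ u) 2 volume ^ (σ / (2 * σ + 1))
          * lpNorm u (ENNReal.ofReal (2 * σ + 2)) volume ^ ((σ + 1) / (2 * σ + 1)) :=
        hC u hu h2u
    _ ≤ C * (√2 * I ^ (1 / 2 : ℝ)) ^ (σ / (2 * σ + 1))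
          * (J ^ (1 / (2 * σ + 2))) ^ ((σ + 1) / (2 * σ + 1)) := by
        rw [← lpNorm_ofReal_eq_integral_norm_rpow hu' (by positivity)]
        have hG : 0 ≤ lpNorm (fderiv ℝ u) 2 volume := lpNorm_nonneg
        have hB : 0 ≤ lpNorm u (ENNReal.ofReal (2 * σ + 2)) volume := lpNorm_nonneg
        gcongr
        exact lpNorm_two_fderiv_le_sqrt_two_mul hu h2u
    _ = (C * √2 ^ (σ / (2 * σ + 1))) * I ^ (σ / (2 * (2 * σ + 1)))
          * J ^ ((σ + 1) / ((2 * σ + 2) * (2 * σ + 1))) := by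
        rw [Real.mul_rpow (by positivity) (by positivity), ← Real.rpow_mul hI, ← Real.rpow_mul hJ,
          one_div_mul_eq_div, one_div_mul_eq_div, div_div, div_div, mul_comm (2 * σ + 1) 2,
          mul_comm (2 * σ + 1)]
        ring
    _ ≤ √2 * (C + 1) * I ^ (σ / (2 * (2 * σ + 1)))
          * J ^ ((σ + 1) / ((2 * σ + 2) * (2 * σ + 1))) := by
        rw [mul_comm √2]
        gcongr
        · linarith
        · exact Real.rpow_le_self_of_one_le (Real.one_le_sqrt.2 one_le_two)
            ((div_le_one (by positivity)).2 (by linarith))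
end

section
/- Let σ > 2 be a real number and λ₁, λ₂ ∈ ℂ². For every ε > 0 there exists a constant C = C(ε, σ, λ₁, λ₂) > 0 such that for every continuously differentiable compactly supported function u : ℝ² → ℂ, |Re ∫_{ℝ²} (λ₁·∇(|u|²u)(x) + (λ₂·∇u(x)) |u(x)|²) · conj(u(x)) dx| ≤ ε ∫_{ℝ²} |∇u(x)|² dx + ε ∫_{ℝ²} |u(x)|^{2σ+2} dx + C ∫_{ℝ²} |u(x)|² dx. -/
open MeasureTheory

/-!
Pointwise, the integrand is bounded by `K |u|³ |∇u|`. Young's inequality splits this into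
`ε |∇u|² + (K² / 2ε) |u|⁶`, and since `2 < 6 < 2σ + 2` the sextic term is absorbed into
`ε |u|^(2σ+2) + C |u|²`. No integration by parts is needed.
-/

theorem exists_mul_rpow_le_add {a b c M ε : ℝ} (ha : 0 ≤ a) (hab : a ≤ b) (hbc : b < c)
    (hM : 0 ≤ M) (hε : 0 < ε) :
    ∃ C > 0, ∀ t : ℝ, 0 ≤ t → M * t ^ b ≤ ε * t ^ c + C * t ^ a := by
  -- below `T`, `t ^ (b - a)` is bounded; above it, `M ≤ ε * t ^ (c - b)`
  set T := (M / ε) ^ (c - b)⁻¹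
  have hT : 0 ≤ T := by positivity
  refine ⟨M * T ^ (b - a) + 1, by positivity, fun t ht => ?_⟩
  have hta : 0 ≤ t ^ a := Real.rpow_nonneg ht a
  rcases le_or_gt t T with htT | hTt
  · have : M * t ^ b ≤ M * T ^ (b - a) * t ^ a := by
      rw [← sub_add_cancel b a, Real.rpow_add_of_nonneg ht (by linarith) ha, add_sub_cancel_right,
        ← mul_assoc]
      gcongr
    nlinarith [Real.rpow_nonneg ht c]
  · have ht0 : 0 < t := hT.trans_lt hTt
    have hMt : M ≤ ε * t ^ (c - b) := by
      rw [← div_le_iff₀' hε]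
      calc M / ε = T ^ (c - b) := (Real.rpow_inv_rpow (by positivity) (by linarith)).symm
        _ ≤ t ^ (c - b) := by gcongr
    have : M * t ^ b ≤ ε * t ^ c := by
      calc M * t ^ b ≤ ε * t ^ (c - b) * t ^ b := by gcongr
        _ = ε * t ^ c := by rw [mul_assoc, ← Real.rpow_add ht0, sub_add_cancel]
    have : 0 ≤ (M * T ^ (b - a) + 1) * t ^ a := by positivity
    linarith

theorem mul_add_le_sq_add_sq_div {ε : ℝ} (hε : 0 < ε) (s a b : ℝ) :
    s * (a + b) ≤ ε * (a ^ 2 + b ^ 2) + s ^ 2 / (2 * ε) := by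
  have h : 0 ≤ ((2 * ε * a - s) ^ 2 + (2 * ε * b - s) ^ 2) / (4 * ε) := by positivity
  have e : ((2 * ε * a - s) ^ 2 + (2 * ε * b - s) ^ 2) / (4 * ε)
      = ε * (a ^ 2 + b ^ 2) + s ^ 2 / (2 * ε) - s * (a + b) := by
    field_simp; ring
  linarith

theorem norm_fderiv_sq_norm_mul_apply_le {E : Type*} [NormedAddCommGroup E] [NormedSpace ℝ E]
    {u : E → ℂ} {x : E} (hu : DifferentiableAt ℝ u x) (v : E) :
    ‖fderiv ℝ (fun y => ((‖u y‖ ^ 2 : ℝ) : ℂ) * u y) x v‖ ≤ 3 * ‖u x‖ ^ 2 * ‖fderiv ℝ u x v‖ := by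
  have hd : HasFDerivAt (fun y => ‖u y‖ ^ 2 • u y) _ x := hu.hasFDerivAt.norm_sq.smul hu.hasFDerivAt
  simp only [← Complex.real_smul]
  rw [hd.fderiv]
  simp only [add_apply, smul_apply,
    ContinuousLinearMap.smulRight_apply, ContinuousLinearMap.comp_apply, innerSL_apply_apply]
  set D := fderiv ℝ u x v
  have hinner : ‖(2 • inner ℝ (u x) D : ℝ)‖ ≤ 2 * (‖u x‖ * ‖D‖) := by
    rw [nsmul_eq_mul, Nat.cast_ofNat, norm_mul, Real.norm_ofNat]
    gcongr
    exact norm_inner_le_norm _ _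
  calc ‖‖u x‖ ^ 2 • D + (2 • inner ℝ (u x) D) • u x‖
      ≤ ‖u x‖ ^ 2 * ‖D‖ + 2 * (‖u x‖ * ‖D‖) * ‖u x‖ := by
        refine (norm_add_le _ _).trans (add_le_add ?_ ?_) <;> rw [norm_smul]
        · rw [norm_pow, norm_norm]
        · gcongr
    _ = 3 * ‖u x‖ ^ 2 * ‖D‖ := by ring

theorem norm_cubic_integrand_le (l₁ l₂ : ℂ × ℂ) (z d₁ d₂ w₁ w₂ : ℂ)
    (hw₁ : ‖w₁‖ ≤ 3 * ‖z‖ ^ 2 * ‖d₁‖) (hw₂ : ‖w₂‖ ≤ 3 * ‖z‖ ^ 2 * ‖d₂‖) :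
    ‖(l₁.1 * w₁ + l₁.2 * w₂ + (l₂.1 * d₁ + l₂.2 * d₂) * ((‖z‖ ^ 2 : ℝ) : ℂ)) * (starRingEnd ℂ) z‖
      ≤ 3 * (‖l₁.1‖ + ‖l₁.2‖ + ‖l₂.1‖ + ‖l₂.2‖) * ‖z‖ ^ 3 * (‖d₁‖ + ‖d₂‖) := by
  have hz : ‖((‖z‖ ^ 2 : ℝ) : ℂ)‖ = ‖z‖ ^ 2 := by simp
  calc _ ≤ (‖l₁.1‖ * ‖w₁‖ + ‖l₁.2‖ * ‖w₂‖ + (‖l₂.1‖ * ‖d₁‖ + ‖l₂.2‖ * ‖d₂‖) * ‖z‖ ^ 2) * ‖z‖ := by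
        rw [norm_mul, RCLike.norm_conj]
        gcongr
        refine (norm_add_le _ _).trans (add_le_add ((norm_add_le _ _).trans ?_) ?_)
        · rw [norm_mul, norm_mul]
        · rw [norm_mul, hz]
          gcongr
          exact (norm_add_le _ _).trans (by rw [norm_mul, norm_mul])
    _ ≤ (‖l₁.1‖ * (3 * ‖z‖ ^ 2 * ‖d₁‖) + ‖l₁.2‖ * (3 * ‖z‖ ^ 2 * ‖d₂‖)
          + (‖l₂.1‖ * ‖d₁‖ + ‖l₂.2‖ * ‖d₂‖) * ‖z‖ ^ 2) * ‖z‖ := by gcongr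
    _ ≤ _ := by
        have h₁ : 0 ≤ ‖z‖ ^ 3 * ‖d₁‖ := by positivity
        have h₂ : 0 ≤ ‖z‖ ^ 3 * ‖d₂‖ := by positivity
        nlinarith [mul_nonneg (norm_nonneg l₁.1) h₂, mul_nonneg (norm_nonneg l₁.2) h₁,
          mul_nonneg (norm_nonneg l₂.1) h₁, mul_nonneg (norm_nonneg l₂.2) h₂,
          mul_nonneg (norm_nonneg l₂.1) h₂, mul_nonneg (norm_nonneg l₂.2) h₁]

theorem abs_re_integral_le_of_norm_le_add {α : Type*} [MeasurableSpace α] {μ : Measure α}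
    {f : α → ℂ} {g₁ g₂ g₃ : α → ℝ} (h₁ : Integrable g₁ μ) (h₂ : Integrable g₂ μ)
    (h₃ : Integrable g₃ μ) {c₁ c₂ c₃ : ℝ} (hf : ∀ x, ‖f x‖ ≤ c₁ * g₁ x + c₂ * g₂ x + c₃ * g₃ x) :
    |(∫ x, f x ∂μ).re| ≤ c₁ * ∫ x, g₁ x ∂μ + c₂ * ∫ x, g₂ x ∂μ + c₃ * ∫ x, g₃ x ∂μ := by
  have hg₁₂ : Integrable (fun x => c₁ * g₁ x + c₂ * g₂ x) μ :=
    (h₁.const_mul c₁).add (h₂.const_mul c₂)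
  have hsplit : ∫ x, c₁ * g₁ x + c₂ * g₂ x + c₃ * g₃ x ∂μ
      = c₁ * ∫ x, g₁ x ∂μ + c₂ * ∫ x, g₂ x ∂μ + c₃ * ∫ x, g₃ x ∂μ := by
    rw [integral_add hg₁₂ (h₃.const_mul c₃), integral_add (h₁.const_mul c₁) (h₂.const_mul c₂),
      integral_const_mul, integral_const_mul, integral_const_mul]
  rw [← hsplit]
  calc |(∫ x, f x ∂μ).re| ≤ ‖∫ x, f x ∂μ‖ := Complex.abs_re_le_norm _
    _ ≤ ∫ x, ‖f x‖ ∂μ := norm_integral_le_integral_norm f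
    _ ≤ _ := integral_mono_of_nonneg (.of_forall fun x => norm_nonneg _)
        (hg₁₂.add (h₃.const_mul c₃)) (.of_forall hf)

/-- For `σ > 2`, `λ₁, λ₂ ∈ ℂ²` and every `ε > 0` there is `C = C(ε,σ,λ₁,λ₂) > 0` such that
for every `C¹` compactly supported `u : ℝ² → ℂ`,
`|Re ∫ (λ₁·∇(|u|²u) + (λ₂·∇u)|u|²) conj(u) dx|
  ≤ ε ∫ |∇u|² dx + ε ∫ |u|^{2σ+2} dx + C ∫ |u|² dx`. -/
theorem stmt11 (σ : ℝ) (hσ : 2 < σ) (lam₁ lam₂ : ℂ × ℂ) (ε : ℝ) (hε : 0 < ε) :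
    ∃ C : ℝ, 0 < C ∧ ∀ u : ℝ × ℝ → ℂ, ContDiff ℝ 1 u → HasCompactSupport u →
      |(∫ x : ℝ × ℝ,
          (lam₁.1 * fderiv ℝ (fun y => ((‖u y‖ ^ 2 : ℝ) : ℂ) * u y) x ((1 : ℝ), (0 : ℝ))
            + lam₁.2 * fderiv ℝ (fun y => ((‖u y‖ ^ 2 : ℝ) : ℂ) * u y) x ((0 : ℝ), (1 : ℝ))
            + (lam₂.1 * fderiv ℝ u x ((1 : ℝ), (0 : ℝ))
                + lam₂.2 * fderiv ℝ u x ((0 : ℝ), (1 : ℝ))) * ((‖u x‖ ^ 2 : ℝ) : ℂ))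
          * (starRingEnd ℂ) (u x)).re|
        ≤ ε * (∫ x : ℝ × ℝ, (‖fderiv ℝ u x ((1 : ℝ), (0 : ℝ))‖ ^ 2
                + ‖fderiv ℝ u x ((0 : ℝ), (1 : ℝ))‖ ^ 2))
          + ε * (∫ x : ℝ × ℝ, ‖u x‖ ^ (2 * σ + 2))
          + C * (∫ x : ℝ × ℝ, ‖u x‖ ^ 2) := by
  set K := 3 * (‖lam₁.1‖ + ‖lam₁.2‖ + ‖lam₂.1‖ + ‖lam₂.2‖)
  obtain ⟨C, hC, hCb⟩ := exists_mul_rpow_le_add (a := 2) (b := 6) (c := 2 * σ + 2)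
    (M := K ^ 2 / (2 * ε)) zero_le_two (by norm_num) (by linarith) (by positivity) hε
  simp only [Real.rpow_ofNat] at hCb
  refine ⟨C, hC, fun u hu hsupp => ?_⟩
  have hdu : Continuous (fderiv ℝ u) := hu.continuous_fderiv one_ne_zero
  refine abs_re_integral_le_of_norm_le_add ?_ ?_ ?_ fun x => ?_
  · exact ((by fun_prop : Continuous fun L : ℝ × ℝ →L[ℝ] ℂ => ‖L (1, 0)‖ ^ 2 + ‖L (0, 1)‖ ^ 2).comp
      hdu).integrable_of_hasCompactSupport ((hsupp.fderiv ℝ).comp_left (by simp))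
  · exact ((continuous_norm.rpow_const fun _ => Or.inr (by positivity)).comp
      hu.continuous).integrable_of_hasCompactSupport
      (hsupp.comp_left (by simp [Real.zero_rpow (by positivity : 2 * σ + 2 ≠ 0)]))
  · exact ((continuous_norm.pow 2).comp hu.continuous).integrable_of_hasCompactSupport
      (hsupp.comp_left (by simp))
  have hux := hu.differentiable one_ne_zero x
  set t := ‖u x‖
  set a := ‖fderiv ℝ u x (1, 0)‖
  set b := ‖fderiv ℝ u x (0, 1)‖
  calc _ ≤ K * t ^ 3 * (a + b) := norm_cubic_integrand_le lam₁ lam₂ (u x) _ _ _ _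
          (norm_fderiv_sq_norm_mul_apply_le hux _) (norm_fderiv_sq_norm_mul_apply_le hux _)
    _ ≤ ε * (a ^ 2 + b ^ 2) + (K * t ^ 3) ^ 2 / (2 * ε) := mul_add_le_sq_add_sq_div hε _ a b
    _ = ε * (a ^ 2 + b ^ 2) + K ^ 2 / (2 * ε) * t ^ 6 := by ring
    _ ≤ ε * (a ^ 2 + b ^ 2) + (ε * t ^ (2 * σ + 2) + C * t ^ 2) := by
        gcongr
        exact hCb t (norm_nonneg _)
    _ = _ := by ring
end

section
/- Let E be a normed space, T > 0, δ ∈ (0, 1/2), and let θ : [0,T] → [0,∞) be Lebesgue integrable. Suppose v : [0,T] → E is Bochner measurable and satisfies ‖v(t) − v(s)‖² ≤ ∫_s^t θ(l) dl for all 0 ≤ s ≤ t ≤ T. Then ∫₀^T ∫₀^T ‖v(t) − v(s)‖² / |t − s|^{1+2δ} dt ds ≤ (T^{1−2δ} / (δ(1 − 2δ))) · ∫₀^T θ(l) dl; in particular the fractional Sobolev seminorm of v of order (δ, 2) is finite. -/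
/-!
For `s < t` the integrand is at most `(t - s)^(-(1+2δ)) ∫_{(s,t]} θ`. The integrand is symmetric
in `(s, t)` and vanishes on the diagonal, so the double integral is twice the integral over
`s < t`, and Tonelli's theorem moves `θ(l)` outside with the weight
`∫∫_{s < l ≤ t} (t - s)^(-(1+2δ)) dt ds = ∫_0^l (l - s)^(-2δ) / (2δ) ds ≤ T^(1-2δ) / (2δ(1-2δ))`.
-/

open MeasureTheory Set Function
open scoped ENNReal

theorem lintegral_Ioi_rpow_of_lt {a c : ℝ} (ha : a < -1) (hc : 0 < c) :
    ∫⁻ x in Ioi c, ENNReal.ofReal (x ^ a) = ENNReal.ofReal (-c ^ (a + 1) / (a + 1)) := by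
  rw [← integral_Ioi_rpow_of_lt ha hc, ofReal_integral_eq_lintegral_ofReal
    (integrableOn_Ioi_rpow_of_lt ha hc)]
  filter_upwards [ae_restrict_mem measurableSet_Ioi] with x hx
  exact Real.rpow_nonneg (hc.trans hx).le a

theorem lintegral_Ici_sub_rpow_of_lt {a s l : ℝ} (ha : a < -1) (hsl : s < l) :
    ∫⁻ t in Ici l, ENNReal.ofReal ((t - s) ^ a)
      = ENNReal.ofReal (-(l - s) ^ (a + 1) / (a + 1)) := by
  rw [← lintegral_Ioi_rpow_of_lt ha (sub_pos.mpr hsl)]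
  conv_rhs => rw [← map_sub_right_eq_self volume s,
    setLIntegral_map measurableSet_Ioi (by fun_prop) (by fun_prop)]
  rw [preimage_sub_const_Ioi, sub_add_cancel, restrict_Ioi_eq_restrict_Ici]

theorem lintegral_Ico_sub_rpow_of_neg_one_lt {r l : ℝ} (hr : -1 < r) (hl : 0 ≤ l) :
    ∫⁻ s in Ico 0 l, ENNReal.ofReal ((l - s) ^ r) = ENNReal.ofReal (l ^ (r + 1) / (r + 1)) := by
  have hint : IntervalIntegrable (fun s => (l - s) ^ r) volume 0 l := by
    simpa using (intervalIntegral.intervalIntegrable_rpow' (a := l) (b := 0) hr).comp_sub_left l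
  rw [restrict_Ico_eq_restrict_Ioc, ← ofReal_integral_eq_lintegral_ofReal
      ((intervalIntegrable_iff_integrableOn_Ioc_of_le hl).mp hint),
    ← intervalIntegral.integral_of_le hl, intervalIntegral.integral_comp_sub_left (· ^ r),
    integral_rpow (Or.inl hr)]
  · simp [Real.zero_rpow (by linarith : r + 1 ≠ 0)]
  · filter_upwards [ae_restrict_mem measurableSet_Ioc] with s hs
    exact Real.rpow_nonneg (by linarith [hs.2]) r

theorem lintegral_lintegral_const_mul {α β : Type*} [MeasurableSpace α] [MeasurableSpace β]
    {μ : Measure α} {ν : Measure β} [SFinite ν] (r : ℝ≥0∞) {f : α → β → ℝ≥0∞}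
    (hf : Measurable (uncurry f)) :
    ∫⁻ x, ∫⁻ y, r * f x y ∂ν ∂μ = r * ∫⁻ x, ∫⁻ y, f x y ∂ν ∂μ := by
  exact (lintegral_congr fun x => lintegral_const_mul _ (hf.comp measurable_prodMk_left)).trans
    (lintegral_const_mul _ hf.lintegral_prod_right')

theorem lintegral_lintegral_lintegral_swap {α β γ : Type*} [MeasurableSpace α]
    [MeasurableSpace β] [MeasurableSpace γ] {μ : Measure α} {ν : Measure β} {ρ : Measure γ}
    [SFinite μ] [SFinite ν] [SFinite ρ] {f : α → β → γ → ℝ≥0∞}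
    (hf : Measurable fun p : α × β × γ => f p.1 p.2.1 p.2.2) :
    ∫⁻ x, ∫⁻ y, ∫⁻ z, f x y z ∂ρ ∂ν ∂μ = ∫⁻ z, ∫⁻ x, ∫⁻ y, f x y z ∂ν ∂μ ∂ρ := by
  calc ∫⁻ x, ∫⁻ y, ∫⁻ z, f x y z ∂ρ ∂ν ∂μ = ∫⁻ x, ∫⁻ z, ∫⁻ y, f x y z ∂ν ∂ρ ∂μ :=
        lintegral_congr fun x => lintegral_lintegral_swap
          (hf.comp (measurable_const.prodMk measurable_id)).aemeasurable
    _ = ∫⁻ z, ∫⁻ x, ∫⁻ y, f x y z ∂ν ∂μ ∂ρ :=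
        lintegral_lintegral_swap <| Measurable.aemeasurable <|
          (hf.comp (f := fun q : (α × γ) × β => (q.1.1, q.2, q.1.2))
            (by fun_prop)).lintegral_prod_right'

theorem lintegral_lintegral_eq_two_mul_of_symm {α : Type*} [LinearOrder α] [TopologicalSpace α]
    [OrderClosedTopology α] [SecondCountableTopology α] [MeasurableSpace α]
    [OpensMeasurableSpace α] {μ : Measure α} [SFinite μ] {F : α → α → ℝ≥0∞}
    (hF : Measurable (uncurry F)) (hsymm : ∀ s t, F s t = F t s) (hdiag : ∀ s, F s s = 0) :
    ∫⁻ s, ∫⁻ t, F s t ∂μ ∂μ = 2 * ∫⁻ s, ∫⁻ t, (Ioi s).indicator (F s) t ∂μ ∂μ := by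
  have hdecomp : ∀ s t, F s t = (Ioi s).indicator (F s) t + (Iio s).indicator (F s) t := by
    intro s t
    rcases lt_trichotomy s t with hst | rfl | hts
    · simp [hst, hst.not_gt]
    · simp [hdiag]
    · simp [hts, hts.not_gt]
  have hlower : ∫⁻ s, ∫⁻ t, (Iio s).indicator (F s) t ∂μ ∂μ
      = ∫⁻ s, ∫⁻ t, (Ioi s).indicator (F s) t ∂μ ∂μ := by
    have hmeas : Measurable (uncurry fun s t => (Iio s).indicator (F s) t) :=
      hF.indicator (measurableSet_lt measurable_snd measurable_fst)
    rw [lintegral_lintegral_swap hmeas.aemeasurable]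
    refine lintegral_congr fun t => lintegral_congr fun s => ?_
    by_cases hts : t < s <;> simp [hts, hsymm s t]
  have hupper : Measurable (uncurry fun s t => (Ioi s).indicator (F s) t) :=
    hF.indicator (measurableSet_lt measurable_fst measurable_snd)
  calc ∫⁻ s, ∫⁻ t, F s t ∂μ ∂μ
      = ∫⁻ s, (∫⁻ t, (Ioi s).indicator (F s) t ∂μ + ∫⁻ t, (Iio s).indicator (F s) t ∂μ) ∂μ :=
        lintegral_congr fun s => (lintegral_congr (hdecomp s)).trans
          (lintegral_add_left (hupper.comp measurable_prodMk_left) _)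
    _ = 2 * ∫⁻ s, ∫⁻ t, (Ioi s).indicator (F s) t ∂μ ∂μ :=
        (lintegral_add_left hupper.lintegral_prod_right' _).trans (by rw [hlower, two_mul]; rfl)

theorem lintegral_indicator_Ioc_mul_rpow {β s l : ℝ} (hβ : 0 < β) :
    ∫⁻ t, (Ioc s t).indicator 1 l * ENNReal.ofReal ((t - s) ^ (-(1 + β)))
      = ENNReal.ofReal β⁻¹ * (Iio l).indicator (fun s => ENNReal.ofReal ((l - s) ^ (-β))) s := by
  by_cases hsl : s < l
  · have hindicator : ∀ t, (Ioc s t).indicator 1 l * ENNReal.ofReal ((t - s) ^ (-(1 + β)))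
        = (Ici l).indicator (fun t => ENNReal.ofReal ((t - s) ^ (-(1 + β)))) t := by
      intro t
      by_cases hlt : l ≤ t <;> simp [hsl, hlt]
    rw [lintegral_congr hindicator, lintegral_indicator measurableSet_Ici,
      lintegral_Ici_sub_rpow_of_lt (by linarith) hsl, indicator_of_mem (mem_Iio.mpr hsl),
      ← ENNReal.ofReal_mul (by positivity), show -(1 + β) + 1 = -β by ring]
    congr 1
    field_simp
  · simp [hsl]

theorem lintegral_lintegral_indicator_Ioc_mul_rpow_le {T β l : ℝ} (hβ0 : 0 < β) (hβ1 : β < 1)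
    (hl : l ∈ Icc 0 T) :
    ∫⁻ s in Icc 0 T, ∫⁻ t in Icc 0 T,
        (Ioc s t).indicator 1 l * ENNReal.ofReal ((t - s) ^ (-(1 + β)))
      ≤ ENNReal.ofReal (T ^ (1 - β) / (β * (1 - β))) := by
  calc _ ≤ ∫⁻ s in Icc 0 T,
        ENNReal.ofReal β⁻¹ * (Iio l).indicator (fun s => ENNReal.ofReal ((l - s) ^ (-β))) s :=
        lintegral_mono fun s => (setLIntegral_le_lintegral _ _).trans_eq
          (lintegral_indicator_Ioc_mul_rpow hβ0)
    _ ≤ ENNReal.ofReal β⁻¹ * ∫⁻ s in Ico 0 l, ENNReal.ofReal ((l - s) ^ (-β)) := by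
        rw [lintegral_const_mul' _ _ ENNReal.ofReal_ne_top, lintegral_indicator measurableSet_Iio,
          Measure.restrict_restrict measurableSet_Iio]
        gcongr
        exact fun s hs => ⟨hs.2.1, hs.1⟩
    _ = ENNReal.ofReal β⁻¹ * ENNReal.ofReal (l ^ (1 - β) / (1 - β)) := by
        rw [lintegral_Ico_sub_rpow_of_neg_one_lt (by linarith) hl.1, neg_add_eq_sub]
    _ ≤ ENNReal.ofReal β⁻¹ * ENNReal.ofReal (T ^ (1 - β) / (1 - β)) := by
        gcongr
        exacts [hl.1, hl.2]
    _ = ENNReal.ofReal (T ^ (1 - β) / (β * (1 - β))) := by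
        rw [← ENNReal.ofReal_mul (by positivity)]
        congr 1
        field_simp

/-- For `s ≥ t` the set `Ioc s t` is empty, so the junk value of `(t - s) ^ (-(1 + β))` is
multiplied by `0`. -/
theorem lintegral_lintegral_Ioc_mul_rpow_le_of_measurable {T β : ℝ} {Θ : ℝ → ℝ≥0∞}
    (hΘ : Measurable Θ) (hβ0 : 0 < β) (hβ1 : β < 1) :
    ∫⁻ s in Icc 0 T, ∫⁻ t in Icc 0 T,
        (∫⁻ l in Ioc s t, Θ l) * ENNReal.ofReal ((t - s) ^ (-(1 + β)))
      ≤ ENNReal.ofReal (T ^ (1 - β) / (β * (1 - β))) * ∫⁻ l in Icc 0 T, Θ l := by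
  set K : ℝ → ℝ → ℝ≥0∞ := fun s t => ENNReal.ofReal ((t - s) ^ (-(1 + β)))
  have hk : Measurable fun q : ℝ × ℝ × ℝ => (Ioc q.1 q.2.1).indicator 1 q.2.2 * K q.1 q.2.1 :=
    (measurable_const.indicator ((measurableSet_lt measurable_fst measurable_snd.snd).inter
      (measurableSet_le measurable_snd.snd measurable_snd.fst))).mul (by fun_prop)
  have hsplit : ∀ s ∈ Icc 0 T, ∀ t ∈ Icc 0 T, (∫⁻ l in Ioc s t, Θ l) * K s t
      = ∫⁻ l in Icc 0 T, Θ l * ((Ioc s t).indicator 1 l * K s t) := by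
    intro s hs t ht
    have hmul : ∀ l, Θ l * ((Ioc s t).indicator 1 l * K s t) = (Ioc s t).indicator Θ l * K s t := by
      intro l
      by_cases hl : l ∈ Ioc s t <;> simp [hl]
    rw [lintegral_congr hmul, lintegral_mul_const' _ _ ENNReal.ofReal_ne_top,
      lintegral_indicator measurableSet_Ioc, Measure.restrict_restrict measurableSet_Ioc,
      inter_eq_left.mpr (Ioc_subset_Icc_self.trans (Icc_subset_Icc hs.1 ht.2))]
  calc ∫⁻ s in Icc 0 T, ∫⁻ t in Icc 0 T, (∫⁻ l in Ioc s t, Θ l) * K s t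
      = ∫⁻ s in Icc 0 T, ∫⁻ t in Icc 0 T, ∫⁻ l in Icc 0 T,
          Θ l * ((Ioc s t).indicator 1 l * K s t) :=
        setLIntegral_congr_fun measurableSet_Icc fun s hs =>
          setLIntegral_congr_fun measurableSet_Icc fun t ht => hsplit s hs t ht
    _ = ∫⁻ l in Icc 0 T, Θ l * ∫⁻ s in Icc 0 T, ∫⁻ t in Icc 0 T,
          (Ioc s t).indicator 1 l * K s t := by
        rw [lintegral_lintegral_lintegral_swap ((hΘ.comp measurable_snd.snd).mul hk)]
        exact lintegral_congr fun l => lintegral_lintegral_const_mul _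
          (hk.comp (f := fun q : ℝ × ℝ => (q.1, q.2, l)) (by fun_prop))
    _ ≤ ∫⁻ l in Icc 0 T, Θ l * ENNReal.ofReal (T ^ (1 - β) / (β * (1 - β))) :=
        setLIntegral_mono (by fun_prop) fun l hl =>
          mul_le_mul_right (lintegral_lintegral_indicator_Ioc_mul_rpow_le hβ0 hβ1 hl) _
    _ = _ := by rw [lintegral_mul_const' _ _ ENNReal.ofReal_ne_top, mul_comm]

theorem lintegral_lintegral_Ioc_mul_rpow_le {T β : ℝ} {Θ : ℝ → ℝ≥0∞}
    (hΘ : AEMeasurable Θ (volume.restrict (Icc 0 T))) (hβ0 : 0 < β) (hβ1 : β < 1) :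
    ∫⁻ s in Icc 0 T, ∫⁻ t in Icc 0 T,
        (∫⁻ l in Ioc s t, Θ l) * ENNReal.ofReal ((t - s) ^ (-(1 + β)))
      ≤ ENNReal.ofReal (T ^ (1 - β) / (β * (1 - β))) * ∫⁻ l in Icc 0 T, Θ l := by
  have hmk : ∀ s ∈ Icc 0 T, ∀ t ∈ Icc 0 T, ∫⁻ l in Ioc s t, Θ l = ∫⁻ l in Ioc s t, hΘ.mk Θ l :=
    fun s hs t ht => lintegral_congr_ae (ae_restrict_of_ae_restrict_of_subset
      (Ioc_subset_Icc_self.trans (Icc_subset_Icc hs.1 ht.2)) hΘ.ae_eq_mk)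
  calc _ = ∫⁻ s in Icc 0 T, ∫⁻ t in Icc 0 T,
        (∫⁻ l in Ioc s t, hΘ.mk Θ l) * ENNReal.ofReal ((t - s) ^ (-(1 + β))) :=
        setLIntegral_congr_fun measurableSet_Icc fun s hs =>
          setLIntegral_congr_fun measurableSet_Icc fun t ht => by rw [hmk s hs t ht]
    _ ≤ ENNReal.ofReal (T ^ (1 - β) / (β * (1 - β))) * ∫⁻ l in Icc 0 T, hΘ.mk Θ l :=
        lintegral_lintegral_Ioc_mul_rpow_le_of_measurable hΘ.measurable_mk hβ0 hβ1
    _ = _ := by rw [lintegral_congr_ae hΘ.ae_eq_mk]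

theorem indicator_Ioi_ofReal_norm_sub_sq_div_rpow_le {E : Type*} [NormedAddCommGroup E]
    {T p : ℝ} {θ : ℝ → ℝ} {v : ℝ → E} (hθ0 : ∀ l, 0 ≤ θ l)
    (hθint : IntegrableOn θ (Icc 0 T))
    (hvθ : ∀ s t : ℝ, 0 ≤ s → s ≤ t → t ≤ T → ‖v t - v s‖ ^ 2 ≤ ∫ l in s..t, θ l)
    {s t : ℝ} (hs : s ∈ Icc 0 T) (ht : t ∈ Icc 0 T) :
    (Ioi s).indicator (fun t => ENNReal.ofReal (‖v t - v s‖ ^ 2 / |t - s| ^ p)) t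
      ≤ (∫⁻ l in Ioc s t, ENNReal.ofReal (θ l)) * ENNReal.ofReal ((t - s) ^ (-p)) := by
  by_cases hst : s < t
  swap
  · simp [hst]
  have hθst : IntegrableOn θ (Ioc s t) :=
    hθint.mono_set (Ioc_subset_Icc_self.trans (Icc_subset_Icc hs.1 ht.2))
  rw [indicator_of_mem (mem_Ioi.mpr hst), ← ofReal_integral_eq_lintegral_ofReal hθst
      (ae_of_all _ hθ0), ← intervalIntegral.integral_of_le hst.le,
    ← ENNReal.ofReal_mul (intervalIntegral.integral_nonneg hst.le fun l _ => hθ0 l)]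
  refine ENNReal.ofReal_le_ofReal ?_
  rw [abs_of_pos (sub_pos.mpr hst), Real.rpow_neg (sub_nonneg.mpr hst.le), ← div_eq_mul_inv]
  exact div_le_div_of_nonneg_right (hvθ s t hs.1 hst.le ht.2)
    (Real.rpow_nonneg (sub_nonneg.mpr hst.le) p)

theorem stmt12_general {E : Type*} [NormedAddCommGroup E]
    (T δ : ℝ) (hδ0 : 0 < δ) (hδ : δ < 1 / 2)
    (θ : ℝ → ℝ) (hθ0 : ∀ l, 0 ≤ θ l) (hθint : IntegrableOn θ (Icc (0 : ℝ) T))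
    (v : ℝ → E) (hv : StronglyMeasurable v)
    (hvθ : ∀ s t : ℝ, 0 ≤ s → s ≤ t → t ≤ T → ‖v t - v s‖ ^ 2 ≤ ∫ l in s..t, θ l) :
    (∫⁻ s in Icc (0 : ℝ) T, ∫⁻ t in Icc (0 : ℝ) T,
        ENNReal.ofReal (‖v t - v s‖ ^ 2 / |t - s| ^ (1 + 2 * δ)))
      ≤ ENNReal.ofReal (T ^ (1 - 2 * δ) / (δ * (1 - 2 * δ)) * ∫ l in Icc (0 : ℝ) T, θ l) ∧
    (∫⁻ s in Icc (0 : ℝ) T, ∫⁻ t in Icc (0 : ℝ) T,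
        ENNReal.ofReal (‖v t - v s‖ ^ 2 / |t - s| ^ (1 + 2 * δ))) < ⊤ := by
  set F : ℝ → ℝ → ℝ≥0∞ := fun s t => ENNReal.ofReal (‖v t - v s‖ ^ 2 / |t - s| ^ (1 + 2 * δ))
  have hF : Measurable (uncurry F) :=
    ((((hv.comp_measurable measurable_snd).sub (hv.comp_measurable measurable_fst)).norm
      |>.measurable.pow_const 2).div (by fun_prop)).ennreal_ofReal
  have key : ∫⁻ s in Icc 0 T, ∫⁻ t in Icc 0 T, F s t
      ≤ ENNReal.ofReal (T ^ (1 - 2 * δ) / (δ * (1 - 2 * δ)) * ∫ l in Icc (0 : ℝ) T, θ l) :=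
    calc ∫⁻ s in Icc 0 T, ∫⁻ t in Icc 0 T, F s t
        = 2 * ∫⁻ s in Icc 0 T, ∫⁻ t in Icc 0 T, (Ioi s).indicator (F s) t :=
          lintegral_lintegral_eq_two_mul_of_symm hF
            (fun s t => by simp only [F, norm_sub_rev, abs_sub_comm]) (fun s => by simp [F])
      _ ≤ 2 * ∫⁻ s in Icc 0 T, ∫⁻ t in Icc 0 T, (∫⁻ l in Ioc s t, ENNReal.ofReal (θ l))
            * ENNReal.ofReal ((t - s) ^ (-(1 + 2 * δ))) := by
          gcongr 1
          exact setLIntegral_mono' measurableSet_Icc fun s hs => setLIntegral_mono'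
            measurableSet_Icc fun t ht =>
              indicator_Ioi_ofReal_norm_sub_sq_div_rpow_le hθ0 hθint hvθ hs ht
      _ ≤ 2 * (ENNReal.ofReal (T ^ (1 - 2 * δ) / (2 * δ * (1 - 2 * δ)))
            * ∫⁻ l in Icc 0 T, ENNReal.ofReal (θ l)) := by
          gcongr 1
          exact lintegral_lintegral_Ioc_mul_rpow_le hθint.aemeasurable.ennreal_ofReal
            (by positivity) (by linarith)
      _ = _ := by
          rw [← ofReal_integral_eq_lintegral_ofReal hθint (ae_of_all _ hθ0), ← mul_assoc,
            ← ENNReal.ofReal_ofNat 2, ← ENNReal.ofReal_mul zero_le_two,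
            ← ENNReal.ofReal_mul' (setIntegral_nonneg measurableSet_Icc fun l _ => hθ0 l)]
          congr 2
          field_simp
  exact ⟨key, key.trans_lt ENNReal.ofReal_lt_top⟩

/-- If `‖v(t) − v(s)‖² ≤ ∫_s^t θ(l) dl` for `0 ≤ s ≤ t ≤ T` and `δ ∈ (0, 1/2)`, then
`∫₀^T ∫₀^T ‖v(t) − v(s)‖²/|t−s|^{1+2δ} dt ds ≤ (T^{1−2δ}/(δ(1−2δ))) ∫₀^T θ(l) dl`;
in particular the fractional Sobolev seminorm of order `(δ,2)` of `v` is finite. -/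
theorem stmt12 {E : Type*} [NormedAddCommGroup E]
    (T δ : ℝ) (hT : 0 < T) (hδ0 : 0 < δ) (hδ : δ < 1 / 2)
    (θ : ℝ → ℝ) (hθ0 : ∀ l, 0 ≤ θ l) (hθint : IntegrableOn θ (Icc (0 : ℝ) T))
    (v : ℝ → E) (hv : StronglyMeasurable v)
    (hvθ : ∀ s t : ℝ, 0 ≤ s → s ≤ t → t ≤ T → ‖v t - v s‖ ^ 2 ≤ ∫ l in s..t, θ l) :
    (∫⁻ s in Icc (0 : ℝ) T, ∫⁻ t in Icc (0 : ℝ) T,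
        ENNReal.ofReal (‖v t - v s‖ ^ 2 / |t - s| ^ (1 + 2 * δ)))
      ≤ ENNReal.ofReal (T ^ (1 - 2 * δ) / (δ * (1 - 2 * δ)) * ∫ l in Icc (0 : ℝ) T, θ l) ∧
    (∫⁻ s in Icc (0 : ℝ) T, ∫⁻ t in Icc (0 : ℝ) T,
        ENNReal.ofReal (‖v t - v s‖ ^ 2 / |t - s| ^ (1 + 2 * δ))) < ⊤ :=
  stmt12_general T δ hδ0 hδ θ hθ0 hθint v hv hvθ
end
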